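/- arXiv:1608.03986 — 6 statements merged into one kernel-verified Lean document; each statement's English description precedes it below -/
import Mathlib

section
/- Let G be a group, n ≥ 1, and let U, V : G → Matrix.unitaryGroup (Fin n) ℂ be maps with U(1) = V(1) = 1, and let λ_U, λ_V : G → G → Circle satisfy U(g)·U(h) = λ_U(g,h) • U(g h) and V(g)·V(h) = λ_V(g,h) • V(g h) for all g, h. Suppose there exists a star-algebra automorphism θ of Matrix (Fin n) (Fin n) ℂ such that θ(U(g)·a·U(g)⁻¹) = V(g)·θ(a)·V(g)⁻¹ for all g ∈ G and all a. Then λ_U and λ_V are cohomologous: there exists μ : G → Circle with μ(1) = 1 and λ_U(g,h) = μ(g)·μ(h)·μ(g h)⁻¹ · λ_V(g,h) for all g, h. -/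
/-- If two unitarily implemented actions of `G` on `Mₙ(ℂ)` are conjugate by a star-algebra
automorphism, then their 2-cocycles are cohomologous. -/
theorem cocycles_of_conjugate_actions_are_cohomologous
    {G : Type*} [Group G] (n : ℕ) (hn : 1 ≤ n)
    (U V : G → Matrix.unitaryGroup (Fin n) ℂ)
    (hU1 : U 1 = 1) (hV1 : V 1 = 1)
    (lamU lamV : G → G → Circle)
    (hlamU : ∀ g h : G, (U g : Matrix (Fin n) (Fin n) ℂ) * (U h : Matrix (Fin n) (Fin n) ℂ) =
      (lamU g h : ℂ) • (U (g * h) : Matrix (Fin n) (Fin n) ℂ))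
    (hlamV : ∀ g h : G, (V g : Matrix (Fin n) (Fin n) ℂ) * (V h : Matrix (Fin n) (Fin n) ℂ) =
      (lamV g h : ℂ) • (V (g * h) : Matrix (Fin n) (Fin n) ℂ))
    (θ : Matrix (Fin n) (Fin n) ℂ ≃⋆ₐ[ℂ] Matrix (Fin n) (Fin n) ℂ)
    (hθ : ∀ (g : G) (a : Matrix (Fin n) (Fin n) ℂ),
      θ ((U g : Matrix (Fin n) (Fin n) ℂ) * a * ((U g)⁻¹ : Matrix.unitaryGroup (Fin n) ℂ)) =
      (V g : Matrix (Fin n) (Fin n) ℂ) * θ a * ((V g)⁻¹ : Matrix.unitaryGroup (Fin n) ℂ)) :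
    ∃ μ : G → Circle, μ 1 = 1 ∧
      ∀ g h : G, lamU g h = μ g * μ h * (μ (g * h))⁻¹ * lamV g h := by
  have i0 : Fin n := ⟨0, hn⟩
  set M := Matrix (Fin n) (Fin n) ℂ with hM
  have hUs : ∀ g : G, star ((U g : M)) * (U g : M) = 1 := fun g => (U g).2.1
  have hUs' : ∀ g : G, (U g : M) * star ((U g : M)) = 1 := fun g => (U g).2.2
  have hVs : ∀ g : G, star ((V g : M)) * (V g : M) = 1 := fun g => (V g).2.1
  have hWs : ∀ g : G, star (θ (U g : M)) * θ (U g : M) = 1 := by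
    intro g; rw [← map_star, ← map_mul, hUs, map_one]
  have hWs' : ∀ g : G, θ (U g : M) * star (θ (U g : M)) = 1 := by
    intro g; rw [← map_star, ← map_mul, hUs', map_one]
  -- key conjugation identity
  have key : ∀ (g : G) (b : M),
      θ (U g : M) * b * (star (θ (U g : M)) * (V g : M)) = (V g : M) * b := by
    intro g b
    have h := hθ g (θ.symm b)
    rw [Matrix.UnitaryGroup.inv_val, Matrix.UnitaryGroup.inv_val] at h
    rw [map_mul, map_mul, StarAlgEquiv.apply_symm_apply] at h
    calc θ (U g : M) * b * (star (θ (U g : M)) * (V g : M))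
        = (θ (U g : M) * b * θ (star (U g : M))) * (V g : M) := by
          simp only [map_star, mul_assoc]
      _ = ((V g : M) * b * star (V g : M)) * (V g : M) := by rw [h]
      _ = (V g : M) * b := by rw [mul_assoc, mul_assoc, hVs, mul_one]
  -- star (θ (U g)) * V g is central, hence scalar
  have hcentral : ∀ g : G, ∃ c : ℂ,
      Matrix.scalar (Fin n) c = star (θ (U g : M)) * (V g : M) := by
    intro g
    apply Matrix.mem_range_scalar_of_commute_single
    intro i j _
    have h1 := key g (Matrix.single i j 1)
    have h2 := key g 1
    rw [mul_one, mul_one] at h2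
    have hA : θ (U g : M) * (Matrix.single i j 1 * (star (θ (U g : M)) * (V g : M)))
        = (V g : M) * Matrix.single i j 1 := by
      rw [← mul_assoc]; exact h1
    have hB : θ (U g : M) * ((star (θ (U g : M)) * (V g : M)) * Matrix.single i j 1)
        = (V g : M) * Matrix.single i j 1 := by
      rw [← mul_assoc, h2]
    have h3 := hA.trans hB.symm
    have h4 := congrArg (fun m => star (θ (U g : M)) * m) h3
    simp only [← mul_assoc, hWs g, one_mul] at h4
    simpa [Commute, SemiconjBy, mul_assoc] using h4
  choose c hc using hcentral
  have hscalar : ∀ g : G, Matrix.scalar (Fin n) (c g) = c g • (1 : M) := by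
    intro g
    rw [Matrix.scalar_apply, Matrix.smul_one_eq_diagonal]
  -- |c g| = 1
  have hXunit : ∀ g : G, star (star (θ (U g : M)) * (V g : M))
      * (star (θ (U g : M)) * (V g : M)) = 1 := by
    intro g
    rw [star_mul, star_star]
    calc star (V g : M) * θ (U g : M) * (star (θ (U g : M)) * (V g : M))
        = star (V g : M) * (θ (U g : M) * star (θ (U g : M))) * (V g : M) := by
          rw [mul_assoc, mul_assoc, mul_assoc]
      _ = 1 := by rw [hWs', mul_one, hVs]
  have hentry : ∀ g : G, (starRingEnd ℂ) (c g) * c g = 1 := by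
    intro g
    have h := hXunit g
    rw [← hc g, hscalar g, star_smul, star_one, smul_mul_smul_comm, one_mul] at h
    have h0 := congrArg (fun m : M => m i0 i0) h
    simp only [Matrix.smul_apply, smul_eq_mul] at h0
    have h1 : (1 : M) i0 i0 = 1 := Matrix.one_apply_eq i0
    rw [h1, mul_one] at h0
    exact h0
  have hnorm : ∀ g : G, ‖c g‖ = 1 := by
    intro g
    have h1 : (Complex.normSq (c g) : ℂ) = 1 := by
      rw [← Complex.mul_conj (c g), mul_comm]
      exact hentry g
    have h2 : Complex.normSq (c g) = 1 := by exact_mod_cast h1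
    rw [Complex.norm_def, h2, Real.sqrt_one]
  -- V g = c g • θ (U g)
  have hVW : ∀ g : G, (V g : M) = c g • θ (U g : M) := by
    intro g
    have h2 := key g 1
    rw [mul_one, mul_one, ← hc g, hscalar g, mul_smul_comm, mul_one] at h2
    exact h2.symm
  have hc0 : ∀ g : G, c g ≠ 0 := by
    intro g hg
    have := hnorm g
    rw [hg] at this
    simpa using this
  refine ⟨fun g => ((show Circle from ⟨c g, mem_sphere_zero_iff_norm.2 (hnorm g)⟩))⁻¹, ?_, ?_⟩
  · have h1 : (V (1:G) : M) = c 1 • θ (U 1 : M) := hVW 1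
    rw [hV1, hU1] at h1
    simp only [Matrix.UnitaryGroup.one_val, map_one, OneMemClass.coe_one] at h1
    have h0 := congrArg (fun m : M => m i0 i0) h1
    simp only [Matrix.smul_apply, Matrix.one_apply_eq, smul_eq_mul, mul_one] at h0
    beta_reduce
    rw [inv_eq_one]
    exact Circle.ext h0.symm
  · intro g h
    have hW0 : θ (U (g * h) : M) ≠ 0 := by
      intro h0
      have h1 := hWs (g * h)
      rw [h0, mul_zero] at h1
      have h2 := congrArg (fun m : M => m i0 i0) h1
      simp [Matrix.one_apply] at h2
    have hWV : ∀ k : G, θ (U k : M) = (c k)⁻¹ • (V k : M) := by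
      intro k
      rw [hVW k, smul_smul, inv_mul_cancel₀ (hc0 k), one_smul]
    have hWmul : θ (U g : M) * θ (U h : M) = (lamU g h : ℂ) • θ (U (g * h) : M) := by
      rw [← map_mul, hlamU g h, map_smul]
    have hWmul' : θ (U g : M) * θ (U h : M)
        = ((c g)⁻¹ * (c h)⁻¹ * (lamV g h : ℂ) * c (g * h)) • θ (U (g * h) : M) := by
      rw [hWV g, hWV h, smul_mul_smul_comm, hlamV g h, hVW (g * h), smul_smul, smul_smul]
    have heq : (lamU g h : ℂ) = (c g)⁻¹ * (c h)⁻¹ * (lamV g h : ℂ) * c (g * h) :=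
      smul_left_injective ℂ hW0 (hWmul.symm.trans hWmul')
    apply Circle.ext
    simp only [Circle.coe_mul, Circle.coe_inv, inv_inv]
    change _ = (c g)⁻¹ * (c h)⁻¹ * ((c (g * h))⁻¹)⁻¹ * (lamV g h : ℂ)
    rw [heq, inv_inv]
    ring
end

section
/- Let ω = exp(2πi/3) ∈ Circle, let G = ZMod 3 × ZMod 3, and define λ : G → G → Circle by λ((r,s),(r',s')) = ω^(s.val · r'.val). Then λ is a 2-cocycle on G, and for k = 1 and k = 2 the power λ^k is not a 2-coboundary: there is no μ : G → Circle with μ(0) = 1 such that λ(x,y)^k = μ(x)·μ(y)·μ(x+y)⁻¹ for all x, y ∈ G. Consequently the classes of 1, λ, λ² are pairwise non-cohomologous. -/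
/-- For `G = ℤ/3 × ℤ/3` and `ω = e^{2πi/3}`, the function
`λ((r,s),(r',s')) = ω^(s·r')` is a 2-cocycle, and neither `λ` nor `λ²` is a 2-coboundary
(so the classes of `1`, `λ`, `λ²` in `H²(G, 𝕋)` are pairwise distinct). -/
theorem zmod3_zmod3_cocycle_not_coboundary
    (ω : Circle) (hω : ω = Circle.exp (2 * Real.pi / 3))
    (lam : ZMod 3 × ZMod 3 → ZMod 3 × ZMod 3 → Circle)
    (hlam : ∀ x y : ZMod 3 × ZMod 3, lam x y = ω ^ (x.2.val * y.1.val)) :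
    ((∀ x : ZMod 3 × ZMod 3, lam x 0 = 1 ∧ lam 0 x = 1) ∧
      (∀ x y z : ZMod 3 × ZMod 3, lam x y * lam (x + y) z = lam x (y + z) * lam y z)) ∧
    (∀ k : ℕ, k = 1 ∨ k = 2 →
      ¬ ∃ μ : ZMod 3 × ZMod 3 → Circle, μ 0 = 1 ∧
        ∀ x y : ZMod 3 × ZMod 3, (lam x y) ^ k = μ x * μ y * (μ (x + y))⁻¹) := by
  have h3 : ω ^ 3 = 1 := by
    rw [hω]
    apply Subtype.coe_injective
    show ((Circle.exp (2 * Real.pi / 3) ^ 3 : Circle) : ℂ) = 1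
    rw [Circle.coe_pow, Circle.coe_exp, ← Complex.exp_nat_mul]
    rw [show ((3:ℕ) : ℂ) * (↑(2 * Real.pi / 3) * Complex.I) = 2 * Real.pi * Complex.I by
      push_cast; ring]
    exact Complex.exp_two_pi_mul_I
  have hne : ω ≠ 1 := by
    intro h
    have h' : Circle.exp (2 * Real.pi / 3) = 1 := hω ▸ h
    have : (Real.cos (2 * Real.pi / 3)) = 1 := by
      have h2 := congrArg (fun z : Circle => (z : ℂ).re) h'
      simpa only [Circle.coe_exp, Complex.exp_ofReal_mul_I_re, Circle.coe_one,
        Complex.one_re] using h2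
    have h2 : Real.cos (2 * Real.pi / 3) = -(1 / 2) := by
      rw [show 2 * Real.pi / 3 = Real.pi - Real.pi / 3 by ring, Real.cos_pi_sub,
        Real.cos_pi_div_three]
    rw [h2] at this; norm_num at this
  have hpow : ∀ m n : ℕ, m % 3 = n % 3 → ω ^ m = ω ^ n := by
    intro m n h
    rw [← Nat.div_add_mod m 3, ← Nat.div_add_mod n 3, pow_add, pow_add, pow_mul, pow_mul,
      h3, one_pow, one_pow, h]
  constructor
  · constructor
    · intro x
      rw [hlam, hlam]
      constructor
      · simp
      · norm_num
    · intro x y z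
      rw [hlam, hlam, hlam, hlam, ← pow_add, ← pow_add]
      apply hpow
      revert x y z
      decide
  · rintro k hk ⟨μ, hμ0, hμ⟩
    set a : ZMod 3 × ZMod 3 := (1, 0)
    set b : ZMod 3 × ZMod 3 := (0, 1)
    have hsym : lam a b ^ k = lam b a ^ k := by
      rw [hμ, hμ, add_comm, mul_comm (μ a) (μ b)]
    have hab : lam a b = 1 := by
      rw [hlam]
      norm_num [a, b]
    have hba : lam b a = ω := by
      rw [hlam]
      simp [a, b, ZMod.val_one]
    rw [hab, hba, one_pow] at hsym
    rcases hk with rfl | rfl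
    · exact hne (by simpa using hsym.symm)
    · apply hne
      have : ω ^ 3 = ω := by rw [pow_succ, ← hsym, one_mul]
      rw [h3] at this
      exact this.symm
end

section
/- Let ω = exp(2πi/3) ∈ Circle, let G = ZMod 3 × ZMod 3, and define λ : G → G → Circle by λ((r,s),(r',s')) = ω^(s.val · r'.val). Then every Circle-valued 2-cocycle c on G is cohomologous to λ^k for some k ∈ {0, 1, 2}: there exist k < 3 and μ : G → Circle with μ(0) = 1 such that c(x,y) = μ(x)·μ(y)·μ(x+y)⁻¹ · λ(x,y)^k for all x, y ∈ G. (In other words, H²(G, Circle) ≅ ℤ/3ℤ.) -/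
open Complex

lemma circle_coe_pow (z : Circle) (n : ℕ) : ((z ^ n : Circle) : ℂ) = (z : ℂ) ^ n := by
  induction n with
  | zero => simp
  | succ m ih => rw [pow_succ, pow_succ, Circle.coe_mul, ih]

lemma aux_bilin {A : Type*} [AddCommGroup A] (d : A → A → ℂ)
    (hne : ∀ x y, d x y ≠ 0)
    (hcoc : ∀ x y z, d x y * d (x + y) z = d x (y + z) * d y z) (x y z : A) :
    d x (y + z) / d (y + z) x = (d x y / d y x) * (d x z / d z x) := by
  have e1 := hcoc x y z
  have e2 := hcoc y z x
  have e3 := hcoc y x z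
  rw [add_comm y x] at e3
  rw [add_comm z x] at e2
  have P : (d x (y+z) * d y x * d z x) * d y z = (d x y * d x z * d (y+z) x) * d y z := by
    linear_combination (-(d y x * d z x)) * e1 + (-(d x y * d x z)) * e2 + (d x y * d z x) * e3
  have P' := mul_right_cancel₀ (hne y z) P
  field_simp [hne (y+z) x, hne y x, hne z x]
  linear_combination P'

lemma aux_L {A : Type*} [AddCommGroup A] (d : A → A → ℂ)
    (hne : ∀ x y, d x y ≠ 0)
    (hcoc : ∀ x y z, d x y * d (x + y) z = d x (y + z) * d y z)
    (hsym : ∀ x y, d x y = d y x) (u u' v v' : A) :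
    d (u + v) (u' + v') * (d u v * d u' v') = d u u' * d v v' * d (u + u') (v + v') := by
  have i1 := hcoc (u + v) u' v'
  have i2 := hcoc u' u v
  have i3 := hcoc (u + u') v v'
  rw [add_comm u' u] at i2
  have hassoc : (u + v) + u' = (u + u') + v := by abel
  rw [hassoc] at i1
  have e2 : d (u + v) u' = d u u' * d (u + u') v / d u v := by
    rw [hsym (u + v) u']
    field_simp [hne u v]
    linear_combination -i2 + d (u + u') v * (hsym u' u)
  have e3 : d ((u + u') + v) v' = d (u + u') (v + v') * d v v' / d (u + u') v := by
    field_simp [hne (u + u') v]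
    linear_combination i3
  have e1 : d (u + v) (u' + v') = d (u + v) u' * d ((u + u') + v) v' / d u' v' := by
    field_simp [hne u' v']
    linear_combination -i1
  rw [e1, e2, e3]
  field_simp [hne u v, hne u' v', hne (u+u') v]


lemma aux_cyclic (f : ZMod 3 → ZMod 3 → ℂ) (g : ZMod 3 → ℂ) (w : ℂ)
    (hne : ∀ r s, f r s ≠ 0)
    (h0l : ∀ r, f 0 r = 1) (h0r : ∀ r, f r 0 = 1)
    (hsym : ∀ r s, f r s = f s r)
    (hcoc : ∀ r s t, f r s * f (r + s) t = f r (s + t) * f s t)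
    (hw : w ^ 3 = f 1 1 * f 2 1)
    (hg0 : g 0 = 1) (hg1 : g 1 = w) (hg2 : g 2 = w ^ 2 / f 1 1) :
    ∀ r r', f r r' * g (r + r') = g r * g r' := by
  have h11 : (1 + 1 : ZMod 3) = 2 := by decide
  have h12 : (1 + 2 : ZMod 3) = 0 := by decide
  have h21 : (2 + 1 : ZMod 3) = 0 := by decide
  have h22 : (2 + 2 : ZMod 3) = 1 := by decide
  have hf21 : f 2 1 = f 2 2 * f 1 1 := by
    have := hcoc 2 1 1
    rw [h21, h11, h0l] at this
    linear_combination this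
  have hcases : ∀ r : ZMod 3, r = 0 ∨ r = 1 ∨ r = 2 := by decide
  intro r r'
  rcases hcases r with rfl | rfl | rfl <;> rcases hcases r' with rfl | rfl | rfl
  · simp [h0l, hg0]
  · simp [h0l, hg0]
  · simp [h0l, hg0]
  · simp [h0r, hg0]
  · -- (1,1)
    rw [h11, hg1, hg2]
    field_simp [hne 1 1]
    try ring
  · -- (1,2)
    rw [h12, hg0, hg1, hg2]
    field_simp [hne 1 1]
    linear_combination f 1 1 * hsym 1 2 - hw
  · simp [h0r, hg0]
  · -- (2,1)
    rw [h21, hg0, hg1, hg2]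
    field_simp [hne 1 1]
    linear_combination -hw
  · -- (2,2)
    rw [h22, hg1, hg2]
    field_simp [hne 1 1]
    linear_combination (-(w * f 1 1)) * hf21 - w * hw

/-- For `G = ℤ/3 × ℤ/3` and `ω = e^{2πi/3}`, every `Circle`-valued 2-cocycle on `G` is
cohomologous to `λ^k` for some `k ∈ {0,1,2}`, where `λ((r,s),(r',s')) = ω^(s·r')`;
i.e. `H²(G, 𝕋) ≅ ℤ/3ℤ` is generated by the class of `λ`. -/
theorem zmod3_zmod3_cocycle_cohomologous_to_power
    (ω : Circle) (hω : ω = Circle.exp (2 * Real.pi / 3))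
    (lam : ZMod 3 × ZMod 3 → ZMod 3 × ZMod 3 → Circle)
    (hlam : ∀ x y : ZMod 3 × ZMod 3, lam x y = ω ^ (x.2.val * y.1.val))
    (c : ZMod 3 × ZMod 3 → ZMod 3 × ZMod 3 → Circle)
    (hc0 : ∀ x : ZMod 3 × ZMod 3, c x 0 = 1 ∧ c 0 x = 1)
    (hccocy : ∀ x y z : ZMod 3 × ZMod 3,
      c x y * c (x + y) z = c x (y + z) * c y z) :
    ∃ k : ℕ, k < 3 ∧ ∃ μ : ZMod 3 × ZMod 3 → Circle, μ 0 = 1 ∧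
      ∀ x y : ZMod 3 × ZMod 3,
        c x y = μ x * μ y * (μ (x + y))⁻¹ * (lam x y) ^ k := by
  have hGdef : True := trivial
  set a : ZMod 3 × ZMod 3 := (1, 0) with ha
  set b : ZMod 3 × ZMod 3 := (0, 1) with hb
  -- complex versions
  set ωc : ℂ := Complex.exp ((2 * Real.pi / 3 : ℝ) * Complex.I) with hωc
  have hωcoe : ((ω : Circle) : ℂ) = ωc := by rw [hω]; rfl
  have hω3 : ωc ^ 3 = 1 := by
    rw [hωc, ← Complex.exp_nat_mul,
      show ((3 : ℕ) : ℂ) * (((2 * Real.pi / 3 : ℝ) : ℂ) * Complex.I) = 2 * Real.pi * I by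
        push_cast; ring]
    exact Complex.exp_two_pi_mul_I
  have hωsum : ωc ^ 2 + ωc + 1 = 0 := by
    have hne : ωc ≠ 1 := by
      intro h
      rw [hωc, Complex.exp_eq_one_iff] at h
      obtain ⟨n, hn⟩ := h
      have h2 : ((2 * Real.pi / 3 : ℝ) : ℂ) = (n : ℂ) * (2 * Real.pi) := by
        apply mul_right_cancel₀ Complex.I_ne_zero
        rw [hn]; ring
      have h3' : (2 * Real.pi / 3 : ℝ) = (n : ℝ) * (2 * Real.pi) := by exact_mod_cast h2
      have h2pi : (2 * Real.pi : ℝ) ≠ 0 := by positivity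
      have hcan : (1 : ℝ) = (n : ℝ) * 3 := by
        apply mul_right_cancel₀ h2pi
        linarith [h3']
      have : (1 : ℤ) = n * 3 := by exact_mod_cast hcan
      omega
    have hsub := sub_ne_zero.mpr hne
    have hfac : (ωc - 1) * (ωc ^ 2 + ωc + 1) = 0 := by linear_combination hω3
    rcases mul_eq_zero.mp hfac with h | h
    · exact absurd h hsub
    · exact h
  -- C and cocycle facts in ℂ
  set C : ZMod 3 × ZMod 3 → ZMod 3 × ZMod 3 → ℂ := fun x y => ((c x y : ℂ)) with hCdef
  have hCne : ∀ x y : ZMod 3 × ZMod 3, C x y ≠ 0 := fun x y => Circle.coe_ne_zero _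
  have hC0r : ∀ x : ZMod 3 × ZMod 3, C x 0 = 1 := fun x => by
    simp only [hCdef, (hc0 x).1, Circle.coe_one]
  have hC0l : ∀ x : ZMod 3 × ZMod 3, C 0 x = 1 := fun x => by
    simp only [hCdef, (hc0 x).2, Circle.coe_one]
  have hCcoc : ∀ x y z : ZMod 3 × ZMod 3, C x y * C (x + y) z = C x (y + z) * C y z := by
    intro x y z
    simp only [hCdef, ← Circle.coe_mul, hccocy x y z]
  -- the antisymmetrized pairing
  set B : ZMod 3 × ZMod 3 → ZMod 3 × ZMod 3 → ℂ := fun x y => C x y / C y x with hBdef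
  have hB2 : ∀ x y z : ZMod 3 × ZMod 3, B x (y + z) = B x y * B x z := fun x y z =>
    aux_bilin C hCne hCcoc x y z
  have hBne : ∀ x y : ZMod 3 × ZMod 3, B x y ≠ 0 := fun x y => div_ne_zero (hCne _ _) (hCne _ _)
  have hBinv : ∀ x y : ZMod 3 × ZMod 3, B x y = (B y x)⁻¹ := fun x y => by
    simp [hBdef, inv_div]
  have hB0r : ∀ x : ZMod 3 × ZMod 3, B x 0 = 1 := fun x => by simp [hBdef, hC0r, hC0l]
  have hB0l : ∀ x : ZMod 3 × ZMod 3, B 0 x = 1 := fun x => by simp [hBdef, hC0r, hC0l]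
  have hBpow2 : ∀ (n : ℕ) (u y : ZMod 3 × ZMod 3), B u (n • y) = B u y ^ n := by
    intro n u y
    induction n with
    | zero => simp [hB0r]
    | succ m ih => rw [succ_nsmul, hB2, ih, pow_succ]
  have hBpow1 : ∀ (n : ℕ) (u y : ZMod 3 × ZMod 3), B (n • u) y = B u y ^ n := by
    intro n u y
    rw [hBinv (n • u) y, hBpow2, ← inv_pow, ← hBinv]
  have hB1 : ∀ x y z : ZMod 3 × ZMod 3, B (x + y) z = B x z * B y z := by
    intro x y z
    rw [hBinv (x + y) z, hB2, mul_inv, ← hBinv, ← hBinv]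
  -- decomposition of elements
  have hdec : ∀ x : ZMod 3 × ZMod 3, x = x.1.val • a + x.2.val • b := by decide
  -- the generator of the pairing values
  set ζ : ℂ := B b a with hζdef
  have hζne : ζ ≠ 0 := hBne b a
  have hζ3 : ζ ^ 3 = 1 := by
    rw [hζdef, ← hBpow1 3 b a, show ((3 : ℕ) • b : ZMod 3 × ZMod 3) = 0 from by decide, hB0l]
  have hζmod : ∀ m : ℕ, ζ ^ m = ζ ^ (m % 3) := by
    intro m
    conv_lhs => rw [← Nat.div_add_mod m 3]
    rw [pow_add, pow_mul, hζ3, one_pow, one_mul]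
  have hζcongr : ∀ m n : ℕ, ((m : ZMod 3) = (n : ZMod 3)) → ζ ^ m = ζ ^ n := by
    intro m n h
    rw [ZMod.natCast_eq_natCast_iff] at h
    rw [hζmod m, hζmod n, h]
  have hBaa : B a a = 1 := div_self (hCne a a)
  have hBbb : B b b = 1 := div_self (hCne b b)
  have hBab : B a b = ζ ^ 2 := by
    rw [hBinv a b]
    exact inv_eq_of_mul_eq_one_right (show ζ * ζ ^ 2 = 1 by linear_combination hζ3)
  -- the bilinear formula for B
  have hBform : ∀ x y : ZMod 3 × ZMod 3, B x y = ζ ^ (x.2.val * y.1.val + 2 * (x.1.val * y.2.val)) := by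
    intro x y
    have hay : B a y = ζ ^ (2 * y.2.val) := by
      conv_lhs => rw [hdec y]
      rw [hB2, hBpow2, hBpow2, hBaa, hBab, one_pow, one_mul, ← pow_mul, mul_comm 2 y.2.val]
    have hby : B b y = ζ ^ y.1.val := by
      conv_lhs => rw [hdec y]
      rw [hB2, hBpow2, hBpow2, hBbb, ← hζdef, one_pow, mul_one]
    conv_lhs => rw [hdec x]
    rw [hB1, hBpow1, hBpow1, hay, hby, ← pow_mul, ← pow_mul, ← pow_add]
    congr 1
    ring
  -- extract k
  have hcube : (ζ - 1) * (ζ - ωc) * (ζ - ωc ^ 2) = 0 := by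
    linear_combination hζ3 + (ζ - ζ ^ 2) * hωsum + (ζ - 1) * hω3
  have hk : ∃ k : ℕ, k < 3 ∧ ζ = ωc ^ k := by
    rcases mul_eq_zero.mp hcube with h | h
    · rcases mul_eq_zero.mp h with h' | h'
      · exact ⟨0, by norm_num, by rw [pow_zero]; exact sub_eq_zero.mp h'⟩
      · exact ⟨1, by norm_num, by rw [pow_one]; exact sub_eq_zero.mp h'⟩
    · exact ⟨2, by norm_num, sub_eq_zero.mp h⟩
  obtain ⟨k, hk3, hζk⟩ := hk
  refine ⟨k, hk3, ?_⟩
  -- the symmetrized cocycle in ℂ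
  set E : ZMod 3 × ZMod 3 → ZMod 3 × ZMod 3 → ℕ := fun x y => x.2.val * y.1.val with hE
  set C1 : ZMod 3 × ZMod 3 → ZMod 3 × ZMod 3 → ℂ := fun x y => C x y / ζ ^ (E x y) with hC1def
  have hC1ne : ∀ x y : ZMod 3 × ZMod 3, C1 x y ≠ 0 :=
    fun x y => div_ne_zero (hCne x y) (pow_ne_zero _ hζne)
  have h3z : (3 : ZMod 3) = 0 := by decide
  have hvalcast : ∀ t : ZMod 3, ((t.val : ZMod 3)) = t := fun t => ZMod.natCast_rightInverse t
  have hC1coc : ∀ x y z : ZMod 3 × ZMod 3,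
      C1 x y * C1 (x + y) z = C1 x (y + z) * C1 y z := by
    intro x y z
    show (C x y / ζ ^ E x y) * (C (x + y) z / ζ ^ E (x + y) z)
        = (C x (y + z) / ζ ^ E x (y + z)) * (C y z / ζ ^ E y z)
    rw [div_mul_div_comm, div_mul_div_comm, ← pow_add, ← pow_add,
      div_eq_div_iff (pow_ne_zero _ hζne) (pow_ne_zero _ hζne), hCcoc x y z]
    congr 1
    apply hζcongr
    simp only [hE]
    push_cast [Prod.fst_add, Prod.snd_add, hvalcast]
    ring
  have hC1sym : ∀ x y : ZMod 3 × ZMod 3, C1 x y = C1 y x := by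
    intro x y
    have hform := hBform x y
    rw [hBdef] at hform
    rw [div_eq_iff (hCne y x)] at hform
    show C x y / ζ ^ E x y = C y x / ζ ^ E y x
    rw [div_eq_div_iff (pow_ne_zero _ hζne) (pow_ne_zero _ hζne), hform]
    have hp : ζ ^ (x.2.val * y.1.val + 2 * (x.1.val * y.2.val)) * ζ ^ (E y x) = ζ ^ (E x y) := by
      rw [← pow_add]
      apply hζcongr
      simp only [hE]
      push_cast [hvalcast]
      linear_combination (x.1 * y.2 : ZMod 3) * h3z
    linear_combination C y x * hp
  -- cube roots in the circle
  have hw3gen : ∀ z : Circle, ((Circle.exp ((z : ℂ).arg / 3) : Circle) : ℂ) ^ 3 = (z : ℂ) := by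
    intro z
    rw [Circle.coe_exp, ← Complex.exp_nat_mul,
      show ((3 : ℕ) : ℂ) * ((((z : ℂ).arg / 3 : ℝ) : ℂ) * Complex.I)
          = (((z : ℂ).arg : ℝ) : ℂ) * Complex.I by push_cast; ring]
    have h := Complex.norm_mul_exp_arg_mul_I (z : ℂ)
    rwa [Circle.norm_coe, Complex.ofReal_one, one_mul] at h
  set za : Circle := c a a * c (a + a) a with hza
  set wa : Circle := Circle.exp ((za : ℂ).arg / 3) with hwadef
  set zb : Circle := c b b * c (b + b) b with hzb
  set wb : Circle := Circle.exp ((zb : ℂ).arg / 3) with hwbdef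
  set μa : ZMod 3 → Circle :=
    fun r => if r = 1 then wa else if r = 2 then (c a a)⁻¹ * wa ^ 2 else 1 with hμa
  set μb : ZMod 3 → Circle :=
    fun r => if r = 1 then wb else if r = 2 then (c b b)⁻¹ * wb ^ 2 else 1 with hμb
  set μ : ZMod 3 × ZMod 3 → Circle :=
    fun x => μa x.1 * μb x.2 * (c (x.1, 0) (0, x.2))⁻¹ with hμdef
  -- axis computations
  have hC10l : ∀ x : ZMod 3 × ZMod 3, C1 0 x = 1 := by
    intro x
    show C 0 x / ζ ^ E 0 x = 1
    simp [hE, hC0l]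
  have hC10r : ∀ x : ZMod 3 × ZMod 3, C1 x 0 = 1 := by
    intro x
    show C x 0 / ζ ^ E x 0 = 1
    simp [hE, hC0r]
  have hC1axA : ∀ r s : ZMod 3, C1 (r, 0) (s, 0) = C (r, 0) (s, 0) := by
    intro r s
    show C _ _ / ζ ^ E (r, 0) (s, 0) = C _ _
    simp [hE]
  have hC1axB : ∀ r s : ZMod 3, C1 (0, r) (0, s) = C (0, r) (0, s) := by
    intro r s
    show C _ _ / ζ ^ E (0, r) (0, s) = C _ _
    simp [hE]
  have hC1mix : ∀ r s : ZMod 3, C1 (r, 0) (0, s) = C (r, 0) (0, s) := by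
    intro r s
    show C _ _ / ζ ^ E (r, 0) (0, s) = C _ _
    simp [hE]
  have ha2 : ((2 : ZMod 3), (0 : ZMod 3)) = a + a := by decide
  have hb2 : ((0 : ZMod 3), (2 : ZMod 3)) = b + b := by decide
  have hwa3 : ((wa : Circle) : ℂ) ^ 3 = C1 (1, 0) (1, 0) * C1 (2, 0) (1, 0) := by
    rw [hC1axA, hC1axA]
    have h := hw3gen za
    rw [← hwadef] at h
    rw [h, hza, Circle.coe_mul, ha2]
  have hwb3 : ((wb : Circle) : ℂ) ^ 3 = C1 (0, 1) (0, 1) * C1 (0, 2) (0, 1) := by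
    rw [hC1axB, hC1axB]
    have h := hw3gen zb
    rw [← hwbdef] at h
    rw [h, hzb, Circle.coe_mul, hb2]
  have hμa0 : ((μa 0 : Circle) : ℂ) = 1 := by
    simp only [hμa]; rw [if_neg (show ¬(0 : ZMod 3) = 1 by decide), if_neg (show ¬(0 : ZMod 3) = 2 by decide)]
    rfl
  have hμa1 : ((μa 1 : Circle) : ℂ) = ((wa : Circle) : ℂ) := by
    simp only [hμa]; rw [if_pos trivial]
  have hμa2 : ((μa 2 : Circle) : ℂ) = ((wa : Circle) : ℂ) ^ 2 / C1 (1, 0) (1, 0) := by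
    simp only [hμa]; rw [if_neg (show ¬(2 : ZMod 3) = 1 by decide), if_pos trivial, hC1axA,
      Circle.coe_mul, Circle.coe_inv, circle_coe_pow, div_eq_mul_inv, mul_comm]
  have hμb0 : ((μb 0 : Circle) : ℂ) = 1 := by
    simp only [hμb]; rw [if_neg (show ¬(0 : ZMod 3) = 1 by decide), if_neg (show ¬(0 : ZMod 3) = 2 by decide)]
    rfl
  have hμb1 : ((μb 1 : Circle) : ℂ) = ((wb : Circle) : ℂ) := by
    simp only [hμb]; rw [if_pos trivial]
  have hμb2 : ((μb 2 : Circle) : ℂ) = ((wb : Circle) : ℂ) ^ 2 / C1 (0, 1) (0, 1) := by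
    simp only [hμb]; rw [if_neg (show ¬(2 : ZMod 3) = 1 by decide), if_pos trivial, hC1axB,
      Circle.coe_mul, Circle.coe_inv, circle_coe_pow, div_eq_mul_inv, mul_comm]
  have cycA : ∀ r r' : ZMod 3,
      C1 (r, 0) (r', 0) * ((μa (r + r') : Circle) : ℂ)
        = ((μa r : Circle) : ℂ) * ((μa r' : Circle) : ℂ) := by
    apply aux_cyclic (f := fun r s => C1 (r, 0) (s, 0)) (g := fun r => ((μa r : Circle) : ℂ)) (w := ((wa : Circle) : ℂ))
    · exact fun r s => hC1ne _ _
    · exact fun s => hC10l (s, 0)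
    · exact fun s => hC10r (s, 0)
    · exact fun r s => hC1sym _ _
    · intro r s t
      have h := hC1coc (r, 0) (s, 0) (t, 0)
      simpa [Prod.mk_add_mk] using h
    · exact hwa3
    · exact hμa0
    · exact hμa1
    · exact hμa2
  have cycB : ∀ r r' : ZMod 3,
      C1 (0, r) (0, r') * ((μb (r + r') : Circle) : ℂ)
        = ((μb r : Circle) : ℂ) * ((μb r' : Circle) : ℂ) := by
    apply aux_cyclic (f := fun r s => C1 (0, r) (0, s)) (g := fun r => ((μb r : Circle) : ℂ)) (w := ((wb : Circle) : ℂ))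
    · exact fun r s => hC1ne _ _
    · exact fun s => hC10l (0, s)
    · exact fun s => hC10r (0, s)
    · exact fun r s => hC1sym _ _
    · intro r s t
      have h := hC1coc (0, r) (0, s) (0, t)
      simpa [Prod.mk_add_mk] using h
    · exact hwb3
    · exact hμb0
    · exact hμb1
    · exact hμb2
  have hμne : ∀ x : ZMod 3 × ZMod 3, ((μ x : Circle) : ℂ) ≠ 0 := fun x => Circle.coe_ne_zero _
  have hμane : ∀ r : ZMod 3, ((μa r : Circle) : ℂ) ≠ 0 := fun r => Circle.coe_ne_zero _
  have hμbne : ∀ r : ZMod 3, ((μb r : Circle) : ℂ) ≠ 0 := fun r => Circle.coe_ne_zero _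
  have hMdef : ∀ x : ZMod 3 × ZMod 3,
      ((μ x : Circle) : ℂ)
        = ((μa x.1 : Circle) : ℂ) * ((μb x.2 : Circle) : ℂ) / C1 (x.1, 0) (0, x.2) := by
    intro x
    rw [hμdef]
    rw [Circle.coe_mul, Circle.coe_mul, Circle.coe_inv, hC1mix x.1 x.2]
    rw [div_eq_mul_inv]
  have hμ0 : μ 0 = 1 := by
    have hz1 : μa 0 = 1 := by
      simp only [hμa]; rw [if_neg (show ¬(0 : ZMod 3) = 1 by decide),
        if_neg (show ¬(0 : ZMod 3) = 2 by decide)]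
    have hz2 : μb 0 = 1 := by
      simp only [hμb]; rw [if_neg (show ¬(0 : ZMod 3) = 1 by decide),
        if_neg (show ¬(0 : ZMod 3) = 2 by decide)]
    show μa (0 : ZMod 3 × ZMod 3).1 * μb (0 : ZMod 3 × ZMod 3).2
        * (c ((0 : ZMod 3 × ZMod 3).1, 0) (0, (0 : ZMod 3 × ZMod 3).2))⁻¹ = 1
    rw [show ((0 : ZMod 3 × ZMod 3).1, (0 : ZMod 3)) = (0 : ZMod 3 × ZMod 3) from rfl,
      show ((0 : ZMod 3), (0 : ZMod 3 × ZMod 3).2) = (0 : ZMod 3 × ZMod 3) from rfl]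
    rw [show (0 : ZMod 3 × ZMod 3).1 = (0 : ZMod 3) from rfl,
      show (0 : ZMod 3 × ZMod 3).2 = (0 : ZMod 3) from rfl, hz1, hz2, (hc0 0).1]
    simp
  have hmain : ∀ x y : ZMod 3 × ZMod 3,
      C1 x y * ((μ (x + y) : Circle) : ℂ) = ((μ x : Circle) : ℂ) * ((μ y : Circle) : ℂ) := by
    intro x y
    have hL := aux_L C1 hC1ne hC1coc hC1sym (x.1, 0) (y.1, 0) (0, x.2) (0, y.2)
    have h1 : ((x.1, 0) : ZMod 3 × ZMod 3) + (0, x.2) = x := by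
      ext <;> simp
    have h2 : ((y.1, 0) : ZMod 3 × ZMod 3) + (0, y.2) = y := by
      ext <;> simp
    have h3 : ((x.1, 0) : ZMod 3 × ZMod 3) + (y.1, 0) = (x.1 + y.1, 0) := by
      ext <;> simp
    have h4 : ((0, x.2) : ZMod 3 × ZMod 3) + (0, y.2) = (0, x.2 + y.2) := by
      ext <;> simp
    rw [h1, h2, h3, h4] at hL
    have hA := cycA x.1 y.1
    have hB' := cycB x.2 y.2
    rw [hMdef x, hMdef y, hMdef (x + y)]
    rw [show (x + y).1 = x.1 + y.1 from rfl, show (x + y).2 = x.2 + y.2 from rfl]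
    field_simp [hC1ne (x.1 + y.1, 0) (0, x.2 + y.2), hC1ne (x.1, 0) (0, x.2),
      hC1ne (y.1, 0) (0, y.2)]
    linear_combination
      (((μa (x.1 + y.1) : Circle) : ℂ) * ((μb (x.2 + y.2) : Circle) : ℂ)) * hL +
      (C1 (x.1 + y.1, 0) (0, x.2 + y.2) * (C1 (0, x.2) (0, y.2) * ((μb (x.2 + y.2) : Circle) : ℂ))) * hA +
      (C1 (x.1 + y.1, 0) (0, x.2 + y.2) * (((μa x.1 : Circle) : ℂ) * ((μa y.1 : Circle) : ℂ))) * hB'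
  refine ⟨μ, hμ0, ?_⟩
  intro x y
  apply Circle.coe_injective
  rw [hlam x y, Circle.coe_mul, Circle.coe_mul, Circle.coe_inv, circle_coe_pow, circle_coe_pow,
    hωcoe]
  have hζE : (ωc ^ (x.2.val * y.1.val)) ^ k = ζ ^ E x y := by
    rw [← pow_mul, mul_comm, pow_mul, ← hζk]
  rw [hζE]
  have h := hmain x y
  rw [hC1def] at h
  simp only at h
  rw [div_mul_eq_mul_div, div_eq_iff (pow_ne_zero _ hζne)] at h
  rw [Circle.coe_mul]
  change C x y = _
  linear_combination (((μ (x + y) : Circle) : ℂ))⁻¹ * h - C x y * mul_inv_cancel₀ (hμne (x + y))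
end

section
/- Let ω = exp(2πi/3) ∈ ℂ, and in Matrix (Fin 3) (Fin 3) ℂ let A₁ = diagonal(1, ω, ω²), A₂ = diagonal(1, ω², ω), and let B be the matrix with rows (0,1,0), (0,0,1), (1,0,0). For i = 1, 2 define π_i : ZMod 3 × ZMod 3 → Matrix (Fin 3) (Fin 3) ℂ by π_i(r,s) = A_i^(r.val) · B^(s.val). Then there is no star-algebra automorphism θ of Matrix (Fin 3) (Fin 3) ℂ such that θ(π₁(x)·a·π₁(x)⁻¹) = π₂(x)·θ(a)·π₂(x)⁻¹ for all x ∈ ZMod 3 × ZMod 3 and all a ∈ Matrix (Fin 3) (Fin 3) ℂ; i.e., the actions α₁ = Ad π₁ and α₂ = Ad π₂ of ZMod 3 × ZMod 3 on M₃(ℂ) are not conjugate. -/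
/-- The actions `Ad π₁` and `Ad π₂` of `ℤ/3 × ℤ/3` on `M₃(ℂ)`, induced by the cocycle
representations `π₁(r,s) = A₁^r B^s` and `π₂(r,s) = A₂^r B^s`, are not conjugate: there is
no star-algebra automorphism `θ` of `M₃(ℂ)` intertwining them. -/
theorem zmod3_zmod3_actions_not_conjugate
    (ω : ℂ) (hω : ω = Complex.exp (2 * Real.pi * Complex.I / 3))
    (A₁ A₂ B : Matrix (Fin 3) (Fin 3) ℂ)
    (hA₁ : A₁ = Matrix.diagonal ![1, ω, ω ^ 2])
    (hA₂ : A₂ = Matrix.diagonal ![1, ω ^ 2, ω])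
    (hB : B = !![0, 1, 0; 0, 0, 1; 1, 0, 0])
    (π₁ π₂ : ZMod 3 × ZMod 3 → Matrix (Fin 3) (Fin 3) ℂ)
    (hπ₁ : ∀ x : ZMod 3 × ZMod 3, π₁ x = A₁ ^ x.1.val * B ^ x.2.val)
    (hπ₂ : ∀ x : ZMod 3 × ZMod 3, π₂ x = A₂ ^ x.1.val * B ^ x.2.val) :
    ¬ ∃ θ : Matrix (Fin 3) (Fin 3) ℂ ≃⋆ₐ[ℂ] Matrix (Fin 3) (Fin 3) ℂ,
      ∀ (x : ZMod 3 × ZMod 3) (a : Matrix (Fin 3) (Fin 3) ℂ),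
        θ (π₁ x * a * (π₁ x)⁻¹) = π₂ x * θ a * (π₂ x)⁻¹ := by
  rintro ⟨θ, hθ⟩
  -- basic facts about ω
  have hω3 : ω ^ 3 = 1 := by
    rw [hω, ← Complex.exp_nat_mul]
    rw [show (3 : ℕ) * (2 * ↑Real.pi * Complex.I / 3) = 2 * ↑Real.pi * Complex.I by
      push_cast; ring]
    exact Complex.exp_two_pi_mul_I
  have hω0 : ω ≠ 0 := by rw [hω]; exact Complex.exp_ne_zero _
  have hω1 : ω ≠ 1 := by
    intro h
    rw [hω] at h
    obtain ⟨n, hn⟩ := Complex.exp_eq_one_iff.mp h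
    have h2 : (2 * (Real.pi : ℂ) * Complex.I) ≠ 0 := by
      simp [Real.pi_ne_zero, Complex.I_ne_zero]
    have h4 : (1 : ℂ) * (2 * (Real.pi : ℂ) * Complex.I)
        = ((3 * n : ℤ) : ℂ) * (2 * (Real.pi : ℂ) * Complex.I) := by
      push_cast
      linear_combination (3 : ℂ) * hn
    have h3 : ((3 * n : ℤ) : ℂ) = 1 := (mul_right_cancel₀ h2 h4).symm
    have : (3 * n : ℤ) = 1 := by exact_mod_cast h3
    omega
  -- matrix identities
  have hA12 : A₁ * A₂ = 1 := by
    subst hA₁ hA₂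
    ext i j
    fin_cases i <;> fin_cases j <;>
      simp [Matrix.mul_apply, Fin.sum_univ_three, Matrix.diagonal, Matrix.one_apply, Matrix.vecHead, Matrix.vecTail] <;>
      linear_combination hω3
  have hA21 : A₂ * A₁ = 1 := by
    subst hA₁ hA₂
    ext i j
    fin_cases i <;> fin_cases j <;>
      simp [Matrix.mul_apply, Fin.sum_univ_three, Matrix.diagonal, Matrix.one_apply, Matrix.vecHead, Matrix.vecTail] <;>
      linear_combination hω3
  have hBB : B * B ^ 2 = 1 := by
    subst hB
    ext i j
    fin_cases i <;> fin_cases j <;>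
      simp [pow_two, Matrix.mul_apply, Fin.sum_univ_three, Matrix.one_apply, Matrix.vecHead, Matrix.vecTail]
  have hB2B : B ^ 2 * B = 1 := by
    subst hB
    ext i j
    fin_cases i <;> fin_cases j <;>
      simp [pow_two, Matrix.mul_apply, Fin.sum_univ_three, Matrix.one_apply, Matrix.vecHead, Matrix.vecTail]
  have hABA : A₁ * B * A₂ = ω ^ 2 • B := by
    subst hA₁ hA₂ hB
    ext i j
    fin_cases i <;> fin_cases j <;>
      simp [Matrix.mul_apply, Fin.sum_univ_three, Matrix.diagonal, Matrix.vecHead, Matrix.vecTail] <;>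
      ring_nf <;> linear_combination hω3
  have hABA' : A₂ * B * A₁ = ω • B := by
    subst hA₁ hA₂ hB
    ext i j
    fin_cases i <;> fin_cases j <;>
      simp [Matrix.mul_apply, Fin.sum_univ_three, Matrix.diagonal, Matrix.vecHead, Matrix.vecTail] <;>
      ring_nf <;> linear_combination ω * hω3
  have hA₁inv : A₁⁻¹ = A₂ := Matrix.inv_eq_right_inv hA12
  have hA₂inv : A₂⁻¹ = A₁ := Matrix.inv_eq_right_inv hA21
  have hBinv : B⁻¹ = B ^ 2 := Matrix.inv_eq_right_inv hBB
  -- the two key intertwining relations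
  have key1 : ∀ a, θ (A₁ * a * A₂) = A₂ * θ a * A₁ := by
    intro a
    have h := hθ (1, 0) a
    rw [hπ₁, hπ₂] at h
    simp only [show ((1, 0) : ZMod 3 × ZMod 3).1.val = 1 from rfl,
      show ((1, 0) : ZMod 3 × ZMod 3).2.val = 0 from rfl, pow_one, pow_zero, mul_one] at h
    rw [hA₁inv, hA₂inv] at h
    exact h
  have key2 : ∀ a, θ B * θ a * θ (B ^ 2) = B * θ a * B ^ 2 := by
    intro a
    have h := hθ (0, 1) a
    rw [hπ₁, hπ₂] at h
    simp only [show ((0, 1) : ZMod 3 × ZMod 3).1.val = 0 from rfl,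
      show ((0, 1) : ZMod 3 × ZMod 3).2.val = 1 from rfl, pow_one, pow_zero, one_mul] at h
    rw [hBinv] at h
    rw [map_mul, map_mul] at h
    exact h
  have hθBB : θ B * θ (B ^ 2) = 1 := by rw [← map_mul, hBB, map_one]
  have hθB2B : θ (B ^ 2) * θ B = 1 := by rw [← map_mul, hB2B, map_one]
  -- X := B² θ(B) commutes with everything
  set X := B ^ 2 * θ B with hX
  have hcomm : ∀ b, X * b = b * X := by
    intro b
    obtain ⟨a, rfl⟩ : ∃ a, θ a = b := ⟨θ.symm b, θ.apply_symm_apply b⟩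
    have h := key2 a
    -- multiply h on the left by B² and on the right by B
    have h1 : θ B * θ a * (θ (B ^ 2) * B) = B * θ a := by
      calc θ B * θ a * (θ (B ^ 2) * B) = θ B * θ a * θ (B ^ 2) * B := by
            rw [mul_assoc (θ B * θ a)]
        _ = B * θ a * B ^ 2 * B := by rw [h]
        _ = B * θ a * (B ^ 2 * B) := by rw [mul_assoc (B * θ a)]
        _ = B * θ a := by rw [hB2B, mul_one]
    have h2 : X * θ a * (θ (B ^ 2) * B) = θ a := by
      calc X * θ a * (θ (B ^ 2) * B) = B ^ 2 * (θ B * θ a * (θ (B ^ 2) * B)) := by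
            rw [hX]; noncomm_ring
        _ = B ^ 2 * (B * θ a) := by rw [h1]
        _ = B ^ 2 * B * θ a := by rw [mul_assoc]
        _ = θ a := by rw [hB2B, one_mul]
    have hYX : (θ (B ^ 2) * B) * X = 1 := by
      calc (θ (B ^ 2) * B) * X = θ (B ^ 2) * (B * B ^ 2) * θ B := by rw [hX]; noncomm_ring
        _ = θ (B ^ 2) * θ B := by rw [hBB, mul_one]
        _ = 1 := hθB2B
    calc X * θ a = X * θ a * ((θ (B ^ 2) * B) * X) := by rw [hYX, mul_one]
      _ = (X * θ a * (θ (B ^ 2) * B)) * X := by noncomm_ring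
      _ = θ a * X := by rw [h2]
  -- hence X is scalar
  obtain ⟨c, hc⟩ : X ∈ Set.range (Matrix.scalar (Fin 3)) := by
    apply Matrix.mem_range_scalar_of_commute_single
    intro i j _
    exact (hcomm _).symm
  have hθB : θ B = c • B := by
    have : θ B = B * X := by
      rw [hX, ← mul_assoc, hBB, one_mul]
    rw [this, ← hc, Matrix.scalar_apply]
    ext i j
    simp [Matrix.mul_diagonal, mul_comm]
  have hc0 : c ≠ 0 := by
    intro h
    rw [h, zero_smul] at hθB
    rw [hθB, zero_mul] at hθBB
    have := congrFun (congrFun hθBB 0) 0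
    simp [Matrix.one_apply] at this
  -- final contradiction
  have hfin := key1 B
  rw [hABA, map_smul, hθB] at hfin
  have : (ω ^ 2 * c) • B = (c * ω) • B := by
    rw [smul_smul] at hfin
    rw [hfin]
    rw [Matrix.mul_smul, Matrix.smul_mul, hABA', smul_smul]
  have hent := congrFun (congrFun this 0) 1
  simp [hB] at hent
  have : ω * (ω - 1) * c = 0 := by linear_combination hent
  rcases mul_eq_zero.mp this with h | h
  · rcases mul_eq_zero.mp h with h | h
    · exact hω0 h
    · exact hω1 (by linear_combination h)
  · exact hc0 h
end

section
/- Let G be a group, let λ_α, λ_β : G → G → Circle, and let π_α : G → Matrix.unitaryGroup (Fin n) ℂ and π_β : G → Matrix.unitaryGroup (Fin k) ℂ be a λ_α-representation and a λ_β-representation respectively (n, k ≥ 1). Then the following are equivalent: (1) there exists a nonzero star-algebra homomorphism T : Matrix (Fin n) (Fin n) ℂ → Matrix (Fin k) (Fin k) ℂ with T(π_α(g)·a·π_α(g)⁻¹) = π_β(g)·T(a)·π_β(g)⁻¹ for all g ∈ G and all a; (2) there exist m ≥ 1, a function λ_γ : G → G → Circle, a λ_γ-representation π_γ : G → Matrix.unitaryGroup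 (Fin m) ℂ, and a matrix u ∈ Matrix (Fin k) (Fin n × Fin m) ℂ with uᴴ·u = 1 (so that p := u·uᴴ is a nonzero projection) such that π_β(g)·u = u·(π_α(g) ⊗ₖ π_γ(g)) for all g ∈ G (so p commutes with every π_β(g), and the restriction of π_β to the range of p is unitarily equivalent to π_α ⊗ π_γ). -/
open Matrix Kronecker

namespace EqvAux


lemma kron_conjT {p q r s : Type*} (A : Matrix p q ℂ) (B : Matrix r s ℂ) :
    (A ⊗ₖ B)ᴴ = Aᴴ ⊗ₖ Bᴴ := by
  ext ⟨i, j⟩ ⟨i', j'⟩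
  simp [conjTranspose_apply, kroneckerMap_apply, StarMul.star_mul, mul_comm]

lemma one_kron_inj {n m : ℕ} (hn : 1 ≤ n) {B C : Matrix (Fin m) (Fin m) ℂ}
    (h : (1 : Matrix (Fin n) (Fin n) ℂ) ⊗ₖ B = (1 : Matrix (Fin n) (Fin n) ℂ) ⊗ₖ C) :
    B = C := by
  ext j j'
  have := congrFun (congrFun h (⟨0, hn⟩, j)) (⟨0, hn⟩, j')
  simpa [kroneckerMap_apply, one_apply] using this

lemma commutant_kron {n m : ℕ} (hn : 1 ≤ n) (X : Matrix (Fin n × Fin m) (Fin n × Fin m) ℂ)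
    (hX : ∀ a : Matrix (Fin n) (Fin n) ℂ,
      X * (a ⊗ₖ (1 : Matrix (Fin m) (Fin m) ℂ)) = (a ⊗ₖ (1 : Matrix (Fin m) (Fin m) ℂ)) * X) :
    ∃ Y : Matrix (Fin m) (Fin m) ℂ, X = (1 : Matrix (Fin n) (Fin n) ℂ) ⊗ₖ Y := by
  set i0 : Fin n := ⟨0, hn⟩
  have key : ∀ (r s i i' : Fin n) (j j' : Fin m),
      (if s = i' then X (i, j) (r, j') else 0)
        = (if r = i then X (s, j) (i', j') else 0) := by
    intro r s i i' j j'
    have h1 := congrFun (congrFun (hX (Matrix.single r s 1)) (i, j)) (i', j')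
    simpa only [mul_apply, kroneckerMap_apply, one_apply, Matrix.single, of_apply,
      Fintype.sum_prod_type, ite_and, mul_ite, mul_one, mul_zero, ite_mul, one_mul, zero_mul,
      Finset.sum_ite_eq, Finset.sum_ite_eq', Finset.mem_univ, if_true,
      Finset.sum_ite_irrel, Finset.sum_const_zero] using h1
  refine ⟨Matrix.of fun j j' => X (i0, j) (i0, j'), ?_⟩
  ext ⟨i, j⟩ ⟨i', j'⟩
  have h2 := key i' i i i j j'
  have h3 := key i i0 i i0 j j'
  rw [if_pos rfl] at h2 h3
  rw [if_pos rfl] at h3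
  simp only [kroneckerMap_apply, one_apply, of_apply]
  rw [h2, h3]
  rcases eq_or_ne i i' with rfl | hii
  · simp
  · simp [hii, Ne.symm hii]



lemma proj_factor {k : ℕ} (P : Matrix (Fin k) (Fin k) ℂ) (hherm : P.IsHermitian)
    (hidem : P * P = P) (hP : P ≠ 0) :
    ∃ m : ℕ, 1 ≤ m ∧ ∃ v : Matrix (Fin k) (Fin m) ℂ, vᴴ * v = 1 ∧ v * vᴴ = P := by
  classical
  set U : Matrix (Fin k) (Fin k) ℂ := (hherm.eigenvectorUnitary : Matrix (Fin k) (Fin k) ℂ)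
    with hUdef
  set d : Fin k → ℂ := RCLike.ofReal ∘ hherm.eigenvalues with hddef
  have hU1 : star U * U = 1 := hherm.eigenvectorUnitary.prop.1
  have hU2 : U * star U = 1 := hherm.eigenvectorUnitary.prop.2
  have hspec : P = U * diagonal d * star U := hherm.spectral_theorem
  have hD : diagonal d = star U * P * U := by
    rw [hspec]
    symm
    calc star U * (U * diagonal d * star U) * U
        = (star U * U) * diagonal d * (star U * U) := by simp only [mul_assoc]
      _ = diagonal d := by rw [hU1]; simp
  have hDD : diagonal d * diagonal d = diagonal d := by
    rw [hD]
    calc (star U * P * U) * (star U * P * U)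
        = star U * (P * (U * star U) * P) * U := by simp only [mul_assoc]
      _ = star U * P * U := by rw [hU2, mul_one, hidem]
  have heval : ∀ i, d i = 0 ∨ d i = 1 := by
    intro i
    have := congrFun (congrFun hDD i) i
    simp only [diagonal_mul_diagonal, diagonal_apply_eq] at this
    have h0 : d i * (d i - 1) = 0 := by ring_nf; linear_combination this
    rcases mul_eq_zero.mp h0 with h | h
    · exact Or.inl h
    · exact Or.inr (sub_eq_zero.mp h)
  -- the subtype of indices with eigenvalue 1
  set S := {i : Fin k // d i = 1}
  have hex : ∃ i, d i = 1 := by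
    by_contra hno
    push_neg at hno
    apply hP
    have hd0 : d = 0 := by
      funext i
      rcases heval i with h | h
      · exact h
      · exact absurd h (hno i)
    rw [hspec, hd0]
    have hz : diagonal (0 : Fin k → ℂ) = 0 := diagonal_zero
    rw [hz, mul_zero, zero_mul]
  haveI : Nonempty S := ⟨⟨hex.choose, hex.choose_spec⟩⟩
  set m := Fintype.card S with hmdef
  have hm : 1 ≤ m := Fintype.card_pos
  set e : S ≃ Fin m := Fintype.equivFin S with hedef
  set c : Fin m → Fin k := fun j => (e.symm j).1 with hcdef
  have hcinj : Function.Injective c := fun a b hab => by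
    apply e.symm.injective
    exact Subtype.ext hab
  refine ⟨m, hm, Matrix.of fun r j => U r (c j), ?_, ?_⟩
  · ext j j'
    have h1 : ((Matrix.of fun r j => U r (c j))ᴴ * Matrix.of fun r j => U r (c j)) j j'
        = (star U * U) (c j) (c j') := by
      simp [mul_apply, conjTranspose_apply, Matrix.star_apply, star_eq_conjTranspose]
    rw [h1, hU1]
    simp [one_apply, hcinj.eq_iff]
  · ext r s
    have h1 : ((Matrix.of fun r j => U r (c j)) * (Matrix.of fun r j => U r (c j))ᴴ) r s
        = ∑ j : Fin m, U r (c j) * star (U s (c j)) := by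
      simp [mul_apply, conjTranspose_apply]
    rw [h1]
    have h2 : ∑ j : Fin m, U r (c j) * star (U s (c j))
        = ∑ x : S, U r x.1 * star (U s x.1) :=
      Equiv.sum_comp e.symm (fun x : S => U r x.1 * star (U s x.1))
    have h3 : ∑ x : S, U r x.1 * star (U s x.1)
        = ∑ i ∈ Finset.univ.filter (fun i => d i = 1), U r i * star (U s i) :=
      (Finset.sum_subtype (Finset.univ.filter (fun i => d i = 1))
        (fun x => by simp) (fun i => U r i * star (U s i))).symm
    have h4 : ∑ i ∈ Finset.univ.filter (fun i => d i = 1), U r i * star (U s i)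
        = ∑ i : Fin k, d i * (U r i * star (U s i)) := by
      rw [Finset.sum_filter]
      refine Finset.sum_congr rfl fun i _ => ?_
      rcases heval i with h | h <;> simp [h]
    have h5 : ∑ i : Fin k, d i * (U r i * star (U s i)) = P r s := by
      rw [hspec, Matrix.mul_apply]
      refine Finset.sum_congr rfl fun i _ => ?_
      rw [Matrix.mul_diagonal, Matrix.star_apply]
      ring
    rw [h2, h3, h4, h5]

lemma starhom_structure {n k : ℕ} (hn : 1 ≤ n)
    (T : Matrix (Fin n) (Fin n) ℂ →⋆ₙₐ[ℂ] Matrix (Fin k) (Fin k) ℂ) (hT : T ≠ 0) :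
    ∃ m : ℕ, 1 ≤ m ∧ ∃ u : Matrix (Fin k) (Fin n × Fin m) ℂ,
      uᴴ * u = 1 ∧ ∀ a, T a = u * (a ⊗ₖ (1 : Matrix (Fin m) (Fin m) ℂ)) * uᴴ := by
  classical
  set i0 : Fin n := ⟨0, hn⟩
  set E : Fin n → Fin n → Matrix (Fin n) (Fin n) ℂ := fun i j => Matrix.single i j 1 with hE
  have hEstar : ∀ i j, star (E i j) = E j i := by
    intro i j
    ext a b
    simp [hE, star_eq_conjTranspose, conjTranspose_apply, Matrix.single, and_comm]
  have hEmul : ∀ i j p q, E i j * E p q = if j = p then E i q else 0 := by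
    intro i j p q
    rcases eq_or_ne j p with rfl | h
    · simp [hE]
    · simp [hE, h, Matrix.single_mul_single_of_ne]
  set P : Matrix (Fin k) (Fin k) ℂ := T (E i0 i0) with hP
  have hTstar : ∀ a, T (star a) = star (T a) := map_star T
  have hPherm : P.IsHermitian := by
    rw [Matrix.IsHermitian, ← star_eq_conjTranspose, hP, ← hTstar, hEstar]
  have hPP : P * P = P := by
    rw [hP, ← _root_.map_mul T, hEmul, if_pos rfl]
  have hP0 : P ≠ 0 := by
    intro h0
    apply hT
    have hEij : ∀ i j, T (E i j) = 0 := by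
      intro i j
      have h1 : E i j = E i i0 * E i0 i0 * E i0 j := by
        rw [hEmul, if_pos rfl, hEmul, if_pos rfl]
      rw [h1, _root_.map_mul T, _root_.map_mul T, ← hP, h0, mul_zero, zero_mul]
    ext a : 1
    show T a = 0
    have ha : a = ∑ i : Fin n, ∑ j : Fin n, (a i j) • E i j := by
      conv_lhs => rw [matrix_eq_sum_single a]
      refine Finset.sum_congr rfl fun i _ => Finset.sum_congr rfl fun j _ => ?_
      rw [hE, smul_single, smul_eq_mul, mul_one]
    rw [ha, map_sum]
    simp [hEij]
  obtain ⟨m, hm, v, hv1, hv2⟩ := proj_factor P hPherm hPP hP0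
  set B : Fin n → Matrix (Fin k) (Fin m) ℂ := fun i => T (E i i0) * v with hB
  have hBB : ∀ i i', (B i)ᴴ * B i' = if i = i' then (1 : Matrix (Fin m) (Fin m) ℂ) else 0 := by
    intro i i'
    have hct : ∀ i : Fin n, (T (E i i0) * v)ᴴ = vᴴ * T (E i0 i) := by
      intro i
      rw [conjTranspose_mul, ← star_eq_conjTranspose (T (E i i0)), ← hTstar, hEstar]
    have h1 : (B i)ᴴ * B i' = vᴴ * (T (E i0 i * E i' i0)) * v := by
      rw [hB]
      show (T (E i i0) * v)ᴴ * (T (E i' i0) * v) = _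
      rw [hct, _root_.map_mul T]
      simp only [Matrix.mul_assoc]
    rw [h1, hEmul]
    rcases eq_or_ne i i' with rfl | h
    · rw [if_pos rfl, if_pos rfl, ← hP, ← hv2]
      calc vᴴ * (v * vᴴ) * v = (vᴴ * v) * (vᴴ * v) := by simp only [Matrix.mul_assoc]
        _ = 1 := by rw [hv1, one_mul]
    · rw [if_neg h, if_neg h, map_zero, Matrix.mul_zero, Matrix.zero_mul]
  have hBBT : ∀ p q, B p * (B q)ᴴ = T (E p q) := by
    intro p q
    have h1 : B p * (B q)ᴴ = T (E p i0) * P * T (E i0 q) := by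
      rw [hB]
      show T (E p i0) * v * (T (E q i0) * v)ᴴ = _
      rw [conjTranspose_mul, ← star_eq_conjTranspose (T (E q i0)), ← hTstar, hEstar, ← hv2]
      simp only [Matrix.mul_assoc]
    rw [h1, hP, ← _root_.map_mul T, ← _root_.map_mul T, hEmul, if_pos rfl, hEmul, if_pos rfl]
  refine ⟨m, hm, Matrix.of fun r p => B p.1 r p.2, ?_, ?_⟩
  · ext ⟨i, j⟩ ⟨i', j'⟩
    have h1 : ((Matrix.of fun r (p : Fin n × Fin m) => B p.1 r p.2)ᴴ *
        Matrix.of fun r (p : Fin n × Fin m) => B p.1 r p.2) (i, j) (i', j')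
        = ((B i)ᴴ * B i') j j' := by
      simp [mul_apply, conjTranspose_apply]
    rw [h1, hBB]
    rcases eq_or_ne i i' with rfl | h
    · simp only [if_pos rfl, one_apply]
      by_cases hjj : j = j' <;> simp [hjj, one_apply, Prod.ext_iff]
    · simp [h, one_apply, Prod.ext_iff]
  · intro a
    have hEk : ∀ p q : Fin n,
        Matrix.of (fun r (x : Fin n × Fin m) => B x.1 r x.2) *
          (E p q ⊗ₖ (1 : Matrix (Fin m) (Fin m) ℂ)) *
          (Matrix.of fun r (x : Fin n × Fin m) => B x.1 r x.2)ᴴ = B p * (B q)ᴴ := by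
      intro p q
      ext r s
      simp only [mul_apply, conjTranspose_apply, of_apply, kroneckerMap_apply, one_apply,
        Fintype.sum_prod_type, hE, Matrix.single, ite_and, mul_ite, ite_mul, mul_one, mul_zero,
        zero_mul, Finset.sum_ite_eq, Finset.sum_ite_eq', Finset.mem_univ, if_true,
        Finset.sum_ite_irrel, Finset.sum_const_zero]
    have ha : a = ∑ i : Fin n, ∑ j : Fin n, (a i j) • E i j := by
      conv_lhs => rw [matrix_eq_sum_single a]
      refine Finset.sum_congr rfl fun i _ => Finset.sum_congr rfl fun j _ => ?_
      rw [hE, smul_single, smul_eq_mul, mul_one]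
    have hsumk2 : (∑ i : Fin n, ∑ j : Fin n, (a i j) • E i j) ⊗ₖ
          (1 : Matrix (Fin m) (Fin m) ℂ) =
        ∑ i : Fin n, ∑ j : Fin n, ((a i j) • E i j) ⊗ₖ (1 : Matrix (Fin m) (Fin m) ℂ) := by
      ext ⟨i, j⟩ ⟨i', j'⟩
      simp [kroneckerMap_apply, Matrix.sum_apply, Finset.sum_mul]
    conv_lhs => rw [ha]
    conv_rhs => rw [ha]
    rw [map_sum, hsumk2, Matrix.mul_sum, Matrix.sum_mul]
    refine Finset.sum_congr rfl fun i _ => ?_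
    rw [map_sum, Matrix.mul_sum, Matrix.sum_mul]
    refine Finset.sum_congr rfl fun j _ => ?_
    rw [_root_.map_smul, smul_kronecker, Matrix.mul_smul, Matrix.smul_mul, hEk, hBBT]


end EqvAux


open EqvAux

/-- Existence of a nonzero equivariant star-homomorphism `Mₙ(ℂ) → M_k(ℂ)` between two
cocycle-representation-induced actions is equivalent to the existence of a cocycle
representation `π_γ` and an isometry `u` intertwining `π_β` with `π_α ⊗ π_γ`. -/
theorem equivariant_hom_iff_tensor_decomposition
    {G : Type*} [Group G] (n k : ℕ) (hn : 1 ≤ n) (hk : 1 ≤ k)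
    (lamα lamβ : G → G → Circle)
    (πα : G → Matrix.unitaryGroup (Fin n) ℂ)
    (πβ : G → Matrix.unitaryGroup (Fin k) ℂ)
    (hπα1 : πα 1 = 1) (hπβ1 : πβ 1 = 1)
    (hπα : ∀ g h : G, (πα g : Matrix (Fin n) (Fin n) ℂ) * (πα h : Matrix (Fin n) (Fin n) ℂ) =
      (lamα g h : ℂ) • (πα (g * h) : Matrix (Fin n) (Fin n) ℂ))
    (hπβ : ∀ g h : G, (πβ g : Matrix (Fin k) (Fin k) ℂ) * (πβ h : Matrix (Fin k) (Fin k) ℂ) =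
      (lamβ g h : ℂ) • (πβ (g * h) : Matrix (Fin k) (Fin k) ℂ)) :
    (∃ T : Matrix (Fin n) (Fin n) ℂ →⋆ₙₐ[ℂ] Matrix (Fin k) (Fin k) ℂ,
      T ≠ 0 ∧
      ∀ (g : G) (a : Matrix (Fin n) (Fin n) ℂ),
        T ((πα g : Matrix (Fin n) (Fin n) ℂ) * a *
            ((πα g)⁻¹ : Matrix.unitaryGroup (Fin n) ℂ)) =
          (πβ g : Matrix (Fin k) (Fin k) ℂ) * T a *
            ((πβ g)⁻¹ : Matrix.unitaryGroup (Fin k) ℂ)) ↔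
    (∃ (m : ℕ), 1 ≤ m ∧
      ∃ (lamγ : G → G → Circle) (πγ : G → Matrix.unitaryGroup (Fin m) ℂ),
        πγ 1 = 1 ∧
        (∀ g h : G, (πγ g : Matrix (Fin m) (Fin m) ℂ) * (πγ h : Matrix (Fin m) (Fin m) ℂ) =
          (lamγ g h : ℂ) • (πγ (g * h) : Matrix (Fin m) (Fin m) ℂ)) ∧
        ∃ u : Matrix (Fin k) (Fin n × Fin m) ℂ,
          uᴴ * u = 1 ∧
          ∀ g : G, (πβ g : Matrix (Fin k) (Fin k) ℂ) * u =
            u * ((πα g : Matrix (Fin n) (Fin n) ℂ) ⊗ₖ (πγ g : Matrix (Fin m) (Fin m) ℂ))) := by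
  have hαinv : ∀ g : G, (((πα g)⁻¹ : Matrix.unitaryGroup (Fin n) ℂ) : Matrix (Fin n) (Fin n) ℂ)
      = (πα g : Matrix (Fin n) (Fin n) ℂ)ᴴ := fun g => by
    rw [← star_eq_conjTranspose]; rfl
  have hβinv : ∀ g : G, (((πβ g)⁻¹ : Matrix.unitaryGroup (Fin k) ℂ) : Matrix (Fin k) (Fin k) ℂ)
      = (πβ g : Matrix (Fin k) (Fin k) ℂ)ᴴ := fun g => by
    rw [← star_eq_conjTranspose]; rfl
  have hαu1 : ∀ g : G, (πα g : Matrix (Fin n) (Fin n) ℂ)ᴴ * (πα g : Matrix (Fin n) (Fin n) ℂ)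
      = 1 := fun g => by rw [← star_eq_conjTranspose]; exact (πα g).prop.1
  have hαu2 : ∀ g : G, (πα g : Matrix (Fin n) (Fin n) ℂ) * (πα g : Matrix (Fin n) (Fin n) ℂ)ᴴ
      = 1 := fun g => by rw [← star_eq_conjTranspose]; exact (πα g).prop.2
  have hβu1 : ∀ g : G, (πβ g : Matrix (Fin k) (Fin k) ℂ)ᴴ * (πβ g : Matrix (Fin k) (Fin k) ℂ)
      = 1 := fun g => by rw [← star_eq_conjTranspose]; exact (πβ g).prop.1
  have hβu2 : ∀ g : G, (πβ g : Matrix (Fin k) (Fin k) ℂ) * (πβ g : Matrix (Fin k) (Fin k) ℂ)ᴴ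
      = 1 := fun g => by rw [← star_eq_conjTranspose]; exact (πβ g).prop.2
  constructor
  · rintro ⟨T, hT0, hTeq⟩
    obtain ⟨m, hm, u, huu, hTu⟩ := starhom_structure hn T hT0
    set p : Matrix (Fin k) (Fin k) ℂ := u * uᴴ with hp
    clear_value p
    have hpH : pᴴ = p := by rw [hp, conjTranspose_mul, conjTranspose_conjTranspose]
    have hpu : p * u = u := by
      rw [hp, Matrix.mul_assoc, huu, Matrix.mul_one]
    have hup : uᴴ * p = uᴴ := by
      rw [hp, ← Matrix.mul_assoc, huu, Matrix.one_mul]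
    have hsand : ∀ M : Matrix (Fin n × Fin m) (Fin n × Fin m) ℂ,
        uᴴ * (u * M * uᴴ) * u = M := by
      intro M
      calc uᴴ * (u * M * uᴴ) * u = (uᴴ * u) * M * (uᴴ * u) := by simp only [Matrix.mul_assoc]
        _ = M := by rw [huu, Matrix.one_mul, Matrix.mul_one]
    have hT1 : T 1 = p := by
      rw [hTu 1, Matrix.one_kronecker_one, Matrix.mul_one, hp]
    have hpcomm : ∀ g : G, (πβ g : Matrix (Fin k) (Fin k) ℂ) * p
        = p * (πβ g : Matrix (Fin k) (Fin k) ℂ) := by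
      intro g
      have h := hTeq g 1
      rw [Matrix.mul_one, hαinv g, hαu2 g, hβinv g, hT1] at h
      have h2 := congrArg (fun M => M * (πβ g : Matrix (Fin k) (Fin k) ℂ)) h
      rw [Matrix.mul_assoc (_ * p), hβu1, Matrix.mul_one] at h2
      exact h2.symm
    have hpcommH : ∀ g : G, (πβ g : Matrix (Fin k) (Fin k) ℂ)ᴴ * p
        = p * (πβ g : Matrix (Fin k) (Fin k) ℂ)ᴴ := by
      intro g
      have := congrArg conjTranspose (hpcomm g)
      simp only [conjTranspose_mul, hpH] at this
      exact this.symm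
    set X : G → Matrix (Fin n × Fin m) (Fin n × Fin m) ℂ :=
      fun g => uᴴ * (πβ g : Matrix (Fin k) (Fin k) ℂ) * u with hX
    clear_value X
    have hXH : ∀ g : G, (X g)ᴴ = uᴴ * (πβ g : Matrix (Fin k) (Fin k) ℂ)ᴴ * u := by
      intro g
      simp only [hX]
      simp only [conjTranspose_mul, conjTranspose_conjTranspose, Matrix.mul_assoc]
    have hXa' : ∀ (g : G) (a : Matrix (Fin n) (Fin n) ℂ),
        (((πα g : Matrix (Fin n) (Fin n) ℂ) * a * (πα g : Matrix (Fin n) (Fin n) ℂ)ᴴ) ⊗ₖ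
          (1 : Matrix (Fin m) (Fin m) ℂ)) = X g * (a ⊗ₖ 1) * (X g)ᴴ := by
      intro g a
      have h := hTeq g a
      rw [hαinv g, hβinv g, hTu, hTu] at h
      have h2 := congrArg (fun M => uᴴ * M * u) h
      rw [hsand] at h2
      rw [h2, hXH g]
      simp only [hX, Matrix.mul_assoc]
    have hXu1 : ∀ g : G, (X g)ᴴ * X g = 1 := by
      intro g
      rw [hXH g]
      simp only [hX]
      calc (uᴴ * (πβ g : Matrix (Fin k) (Fin k) ℂ)ᴴ * u) *
            (uᴴ * (πβ g : Matrix (Fin k) (Fin k) ℂ) * u)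
          = uᴴ * ((πβ g : Matrix (Fin k) (Fin k) ℂ)ᴴ * p * (πβ g : Matrix (Fin k) (Fin k) ℂ)) * u
            := by rw [hp]; simp only [Matrix.mul_assoc]
        _ = uᴴ * (p * ((πβ g : Matrix (Fin k) (Fin k) ℂ)ᴴ * (πβ g : Matrix (Fin k) (Fin k) ℂ)))
              * u := by rw [hpcommH g]; simp only [Matrix.mul_assoc]
        _ = 1 := by
              rw [hβu1, Matrix.mul_one, hp, ← Matrix.mul_assoc, huu, Matrix.one_mul, huu]
    have hXu2 : ∀ g : G, X g * (X g)ᴴ = 1 := by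
      intro g
      rw [hXH g]
      simp only [hX]
      calc (uᴴ * (πβ g : Matrix (Fin k) (Fin k) ℂ) * u) *
            (uᴴ * (πβ g : Matrix (Fin k) (Fin k) ℂ)ᴴ * u)
          = uᴴ * ((πβ g : Matrix (Fin k) (Fin k) ℂ) * p * (πβ g : Matrix (Fin k) (Fin k) ℂ)ᴴ) * u
            := by rw [hp]; simp only [Matrix.mul_assoc]
        _ = uᴴ * (p * ((πβ g : Matrix (Fin k) (Fin k) ℂ) * (πβ g : Matrix (Fin k) (Fin k) ℂ)ᴴ))
              * u := by rw [hpcomm g]; simp only [Matrix.mul_assoc]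
        _ = 1 := by
              rw [hβu2, Matrix.mul_one, hp, ← Matrix.mul_assoc, huu, Matrix.one_mul, huu]
    have hXa : ∀ (g : G) (a : Matrix (Fin n) (Fin n) ℂ),
        X g * (a ⊗ₖ (1 : Matrix (Fin m) (Fin m) ℂ)) =
          (((πα g : Matrix (Fin n) (Fin n) ℂ) * a * (πα g : Matrix (Fin n) (Fin n) ℂ)ᴴ) ⊗ₖ
            (1 : Matrix (Fin m) (Fin m) ℂ)) * X g := by
      intro g a
      rw [hXa' g a, Matrix.mul_assoc, hXu1 g, Matrix.mul_one]
    have hZcomm : ∀ g : G, ∀ a : Matrix (Fin n) (Fin n) ℂ,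
        (((πα g : Matrix (Fin n) (Fin n) ℂ)ᴴ ⊗ₖ (1 : Matrix (Fin m) (Fin m) ℂ)) * X g) *
            (a ⊗ₖ (1 : Matrix (Fin m) (Fin m) ℂ)) =
          (a ⊗ₖ (1 : Matrix (Fin m) (Fin m) ℂ)) *
            (((πα g : Matrix (Fin n) (Fin n) ℂ)ᴴ ⊗ₖ (1 : Matrix (Fin m) (Fin m) ℂ)) * X g) := by
      intro g a
      calc (((πα g : Matrix (Fin n) (Fin n) ℂ)ᴴ ⊗ₖ (1 : Matrix (Fin m) (Fin m) ℂ)) * X g) *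
            (a ⊗ₖ (1 : Matrix (Fin m) (Fin m) ℂ))
          = ((πα g : Matrix (Fin n) (Fin n) ℂ)ᴴ ⊗ₖ (1 : Matrix (Fin m) (Fin m) ℂ)) *
              (X g * (a ⊗ₖ (1 : Matrix (Fin m) (Fin m) ℂ))) := by rw [Matrix.mul_assoc]
        _ = (((πα g : Matrix (Fin n) (Fin n) ℂ)ᴴ *
              ((πα g : Matrix (Fin n) (Fin n) ℂ) * a * (πα g : Matrix (Fin n) (Fin n) ℂ)ᴴ)) ⊗ₖ
              ((1 : Matrix (Fin m) (Fin m) ℂ) * 1)) * X g := by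
            rw [hXa g a, ← Matrix.mul_assoc, ← Matrix.mul_kronecker_mul]
        _ = ((a * (πα g : Matrix (Fin n) (Fin n) ℂ)ᴴ) ⊗ₖ
              ((1 : Matrix (Fin m) (Fin m) ℂ) * 1)) * X g := by
            rw [← Matrix.mul_assoc, ← Matrix.mul_assoc, hαu1 g, Matrix.one_mul]
        _ = (a ⊗ₖ (1 : Matrix (Fin m) (Fin m) ℂ)) *
            (((πα g : Matrix (Fin n) (Fin n) ℂ)ᴴ ⊗ₖ (1 : Matrix (Fin m) (Fin m) ℂ)) * X g) := by
            rw [← Matrix.mul_assoc, ← Matrix.mul_kronecker_mul]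
    have hY : ∀ g : G, ∃ Y : Matrix (Fin m) (Fin m) ℂ,
        ((πα g : Matrix (Fin n) (Fin n) ℂ)ᴴ ⊗ₖ (1 : Matrix (Fin m) (Fin m) ℂ)) * X g
          = (1 : Matrix (Fin n) (Fin n) ℂ) ⊗ₖ Y :=
      fun g => commutant_kron hn _ (hZcomm g)
    set Y : G → Matrix (Fin m) (Fin m) ℂ := fun g => (hY g).choose with hYdef
    have hYspec : ∀ g : G,
        ((πα g : Matrix (Fin n) (Fin n) ℂ)ᴴ ⊗ₖ (1 : Matrix (Fin m) (Fin m) ℂ)) * X g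
          = (1 : Matrix (Fin n) (Fin n) ℂ) ⊗ₖ Y g := fun g => (hY g).choose_spec
    clear_value Y
    have hXY : ∀ g : G, X g = (πα g : Matrix (Fin n) (Fin n) ℂ) ⊗ₖ Y g := by
      intro g
      calc X g = (((πα g : Matrix (Fin n) (Fin n) ℂ) * (πα g : Matrix (Fin n) (Fin n) ℂ)ᴴ) ⊗ₖ
            ((1 : Matrix (Fin m) (Fin m) ℂ) * 1)) * X g := by
            rw [hαu2 g, Matrix.one_mul, Matrix.one_kronecker_one, Matrix.one_mul]
        _ = ((πα g : Matrix (Fin n) (Fin n) ℂ) ⊗ₖ (1 : Matrix (Fin m) (Fin m) ℂ)) *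
            (((πα g : Matrix (Fin n) (Fin n) ℂ)ᴴ ⊗ₖ (1 : Matrix (Fin m) (Fin m) ℂ)) * X g) := by
            rw [← Matrix.mul_assoc, ← Matrix.mul_kronecker_mul]
        _ = ((πα g : Matrix (Fin n) (Fin n) ℂ) ⊗ₖ (1 : Matrix (Fin m) (Fin m) ℂ)) *
            ((1 : Matrix (Fin n) (Fin n) ℂ) ⊗ₖ Y g) := by rw [hYspec g]
        _ = (πα g : Matrix (Fin n) (Fin n) ℂ) ⊗ₖ Y g := by
            rw [← Matrix.mul_kronecker_mul, Matrix.mul_one, Matrix.one_mul]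
    have hYu1 : ∀ g : G, star (Y g) * Y g = 1 := by
      intro g
      apply one_kron_inj hn (m := m)
      have h1 := hXu1 g
      rw [hXY g, kron_conjT, ← Matrix.mul_kronecker_mul, hαu1 g] at h1
      rw [star_eq_conjTranspose, h1, Matrix.one_kronecker_one]
    have hYu2 : ∀ g : G, Y g * star (Y g) = 1 := by
      intro g
      apply one_kron_inj hn (m := m)
      have h1 := hXu2 g
      rw [hXY g, kron_conjT, ← Matrix.mul_kronecker_mul, hαu2 g] at h1
      rw [star_eq_conjTranspose, h1, Matrix.one_kronecker_one]
    set πγ : G → Matrix.unitaryGroup (Fin m) ℂ := fun g => ⟨Y g, hYu1 g, hYu2 g⟩ with hπγ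
    have hXmul : ∀ g h : G, X g * X h = (lamβ g h : ℂ) • X (g * h) := by
      intro g h
      calc X g * X h
          = uᴴ * ((πβ g : Matrix (Fin k) (Fin k) ℂ) * p * (πβ h : Matrix (Fin k) (Fin k) ℂ)) * u
            := by simp only [hX, hp, Matrix.mul_assoc]
        _ = uᴴ * (p * ((πβ g : Matrix (Fin k) (Fin k) ℂ) * (πβ h : Matrix (Fin k) (Fin k) ℂ)))
              * u := by rw [hpcomm g]; simp only [Matrix.mul_assoc]
        _ = uᴴ * ((πβ g : Matrix (Fin k) (Fin k) ℂ) * (πβ h : Matrix (Fin k) (Fin k) ℂ)) * u := by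
            rw [← Matrix.mul_assoc, ← Matrix.mul_assoc, hup]
            simp only [Matrix.mul_assoc]
        _ = (lamβ g h : ℂ) • X (g * h) := by
            rw [hπβ g h]
            simp only [hX, Matrix.mul_smul, Matrix.smul_mul]
    have hYmul : ∀ g h : G, Y g * Y h = ((lamβ g h : ℂ) * (lamα g h : ℂ)⁻¹) • Y (g * h) := by
      intro g h
      apply one_kron_inj hn (m := m)
      have h1 := hXmul g h
      rw [hXY g, hXY h, hXY (g * h), ← Matrix.mul_kronecker_mul, hπα g h,
        Matrix.smul_kronecker] at h1
      -- h1 : (lamα g h : ℂ) • ((πα (g*h)) ⊗ₖ (Y g * Y h)) = (lamβ g h : ℂ) • (πα (g*h) ⊗ₖ Y (g*h))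
      have h2 := congrArg (fun M => ((πα (g * h) : Matrix (Fin n) (Fin n) ℂ)ᴴ ⊗ₖ
        (1 : Matrix (Fin m) (Fin m) ℂ)) * M) h1
      simp only [Matrix.mul_smul, ← Matrix.mul_kronecker_mul, hαu1 (g * h),
        Matrix.one_mul] at h2
      -- h2 : lamα • (1 ⊗ₖ (Y g * Y h)) = lamβ • (1 ⊗ₖ Y (g*h))
      have h3 : (1 : Matrix (Fin n) (Fin n) ℂ) ⊗ₖ (Y g * Y h)
          = ((lamβ g h : ℂ) * (lamα g h : ℂ)⁻¹) •
            ((1 : Matrix (Fin n) (Fin n) ℂ) ⊗ₖ Y (g * h)) := by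
        have hz : (lamα g h : ℂ) ≠ 0 := Circle.coe_ne_zero _
        rw [mul_comm, mul_smul, ← h2, inv_smul_smul₀ hz]
      rw [h3, ← Matrix.kronecker_smul]
    refine ⟨m, hm, fun g h => lamβ g h * (lamα g h)⁻¹, πγ, ?_, ?_, u, huu, ?_⟩
    · have hX1 : X 1 = 1 := by
        simp only [hX]
        rw [hπβ1]
        show uᴴ * ((1 : Matrix.unitaryGroup (Fin k) ℂ) : Matrix (Fin k) (Fin k) ℂ) * u = 1
        rw [Matrix.UnitaryGroup.one_val, Matrix.mul_one, huu]
      have h1 := hXY 1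
      rw [hX1, hπα1] at h1
      have h2 : (1 : Matrix (Fin n) (Fin n) ℂ) ⊗ₖ (1 : Matrix (Fin m) (Fin m) ℂ)
          = (1 : Matrix (Fin n) (Fin n) ℂ) ⊗ₖ Y 1 := by
        rw [Matrix.one_kronecker_one]
        rw [show ((1 : Matrix.unitaryGroup (Fin n) ℂ) : Matrix (Fin n) (Fin n) ℂ)
          = (1 : Matrix (Fin n) (Fin n) ℂ) from Matrix.UnitaryGroup.one_val] at h1
        exact h1
      have h3 := one_kron_inj hn h2
      rw [hπγ]
      exact Subtype.ext h3.symm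
    · intro g h
      show Y g * Y h = ((lamβ g h * (lamα g h)⁻¹ : Circle) : ℂ) • Y (g * h)
      rw [hYmul g h, Circle.coe_mul, Circle.coe_inv]
    · intro g
      calc (πβ g : Matrix (Fin k) (Fin k) ℂ) * u
          = (πβ g : Matrix (Fin k) (Fin k) ℂ) * (u * (uᴴ * u)) := by
            rw [huu, Matrix.mul_one]
        _ = ((πβ g : Matrix (Fin k) (Fin k) ℂ) * p) * u := by simp only [hp, Matrix.mul_assoc]
        _ = p * ((πβ g : Matrix (Fin k) (Fin k) ℂ) * u) := by
            rw [hpcomm g, Matrix.mul_assoc]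
        _ = u * X g := by simp only [hX, hp, Matrix.mul_assoc]
        _ = u * ((πα g : Matrix (Fin n) (Fin n) ℂ) ⊗ₖ (πγ g : Matrix (Fin m) (Fin m) ℂ)) := by
            rw [hXY g]
  · rintro ⟨m, hm, lamγ, πγ, hπγ1, hπγmul, u, huu, hint⟩
    have hγu1 : ∀ g : G, (πγ g : Matrix (Fin m) (Fin m) ℂ)ᴴ * (πγ g : Matrix (Fin m) (Fin m) ℂ)
        = 1 := fun g => by rw [← star_eq_conjTranspose]; exact (πγ g).prop.1
    have hγu2 : ∀ g : G, (πγ g : Matrix (Fin m) (Fin m) ℂ) * (πγ g : Matrix (Fin m) (Fin m) ℂ)ᴴ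
        = 1 := fun g => by rw [← star_eq_conjTranspose]; exact (πγ g).prop.2
    refine ⟨{ toFun := fun a => u * (a ⊗ₖ (1 : Matrix (Fin m) (Fin m) ℂ)) * uᴴ
              map_smul' := ?_
              map_zero' := ?_
              map_add' := ?_
              map_mul' := ?_
              map_star' := ?_ }, ?_, ?_⟩
    · intro c a
      simp only [MonoidHom.id_apply, Matrix.smul_kronecker, Matrix.mul_smul, Matrix.smul_mul]
    · simp only [Matrix.zero_kronecker, Matrix.mul_zero, Matrix.zero_mul]
    · intro a b
      simp only [Matrix.add_kronecker, Matrix.mul_add, Matrix.add_mul]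
    · intro a b
      show u * ((a * b) ⊗ₖ (1 : Matrix (Fin m) (Fin m) ℂ)) * uᴴ
          = (u * (a ⊗ₖ 1) * uᴴ) * (u * (b ⊗ₖ 1) * uᴴ)
      calc u * ((a * b) ⊗ₖ (1 : Matrix (Fin m) (Fin m) ℂ)) * uᴴ
          = u * ((a ⊗ₖ (1 : Matrix (Fin m) (Fin m) ℂ)) *
              (b ⊗ₖ (1 : Matrix (Fin m) (Fin m) ℂ))) * uᴴ := by
            rw [← Matrix.mul_kronecker_mul, Matrix.mul_one]
        _ = (u * (a ⊗ₖ (1 : Matrix (Fin m) (Fin m) ℂ)) * uᴴ) *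
            (u * (b ⊗ₖ (1 : Matrix (Fin m) (Fin m) ℂ)) * uᴴ) := by
            rw [show (u * (a ⊗ₖ (1 : Matrix (Fin m) (Fin m) ℂ)) * uᴴ) *
                (u * (b ⊗ₖ (1 : Matrix (Fin m) (Fin m) ℂ)) * uᴴ)
              = u * ((a ⊗ₖ (1 : Matrix (Fin m) (Fin m) ℂ)) * ((uᴴ * u) *
                ((b ⊗ₖ (1 : Matrix (Fin m) (Fin m) ℂ)) * uᴴ))) from by
                simp only [Matrix.mul_assoc], huu, Matrix.one_mul]
            simp only [Matrix.mul_assoc]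
    · intro a
      symm
      show star (u * (a ⊗ₖ (1 : Matrix (Fin m) (Fin m) ℂ)) * uᴴ)
          = u * ((star a) ⊗ₖ (1 : Matrix (Fin m) (Fin m) ℂ)) * uᴴ
      rw [star_eq_conjTranspose, conjTranspose_mul, conjTranspose_mul,
        conjTranspose_conjTranspose, kron_conjT, conjTranspose_one,
        star_eq_conjTranspose, Matrix.mul_assoc]
    · intro h0
      have h1 : u * ((1 : Matrix (Fin n) (Fin n) ℂ) ⊗ₖ (1 : Matrix (Fin m) (Fin m) ℂ)) * uᴴ
          = 0 := by
        have := congrArg (fun f => f (1 : Matrix (Fin n) (Fin n) ℂ)) h0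
        simpa using this
      rw [Matrix.one_kronecker_one, Matrix.mul_one] at h1
      have h2 : (1 : Matrix (Fin n × Fin m) (Fin n × Fin m) ℂ) = 0 := by
        calc (1 : Matrix (Fin n × Fin m) (Fin n × Fin m) ℂ) = (uᴴ * u) * (uᴴ * u) := by
              rw [huu, Matrix.one_mul]
          _ = uᴴ * (u * uᴴ) * u := by simp only [Matrix.mul_assoc]
          _ = 0 := by rw [h1, Matrix.mul_zero, Matrix.zero_mul]
      have h3 := congrFun (congrFun h2 (⟨0, hn⟩, ⟨0, hm⟩)) (⟨0, hn⟩, ⟨0, hm⟩)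
      simp [Matrix.one_apply] at h3
    · intro g a
      show u * (((πα g : Matrix (Fin n) (Fin n) ℂ) * a *
          (((πα g)⁻¹ : Matrix.unitaryGroup (Fin n) ℂ) : Matrix (Fin n) (Fin n) ℂ)) ⊗ₖ
            (1 : Matrix (Fin m) (Fin m) ℂ)) * uᴴ
        = (πβ g : Matrix (Fin k) (Fin k) ℂ) * (u * (a ⊗ₖ (1 : Matrix (Fin m) (Fin m) ℂ)) * uᴴ) *
          (((πβ g)⁻¹ : Matrix.unitaryGroup (Fin k) ℂ) : Matrix (Fin k) (Fin k) ℂ)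
      rw [hαinv g, hβinv g]
      have hkr : ((πα g : Matrix (Fin n) (Fin n) ℂ) * a *
            (πα g : Matrix (Fin n) (Fin n) ℂ)ᴴ) ⊗ₖ (1 : Matrix (Fin m) (Fin m) ℂ)
          = ((πα g : Matrix (Fin n) (Fin n) ℂ) ⊗ₖ (πγ g : Matrix (Fin m) (Fin m) ℂ)) *
            (a ⊗ₖ (1 : Matrix (Fin m) (Fin m) ℂ)) *
            ((πα g : Matrix (Fin n) (Fin n) ℂ) ⊗ₖ (πγ g : Matrix (Fin m) (Fin m) ℂ))ᴴ := by
        rw [kron_conjT, ← Matrix.mul_kronecker_mul, ← Matrix.mul_kronecker_mul, Matrix.mul_one,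
          hγu2 g]
      rw [hkr]
      have hu2 : u * ((πα g : Matrix (Fin n) (Fin n) ℂ) ⊗ₖ (πγ g : Matrix (Fin m) (Fin m) ℂ))ᴴ
          * uᴴ = uᴴᴴ * ((πα g : Matrix (Fin n) (Fin n) ℂ) ⊗ₖ
            (πγ g : Matrix (Fin m) (Fin m) ℂ))ᴴ * uᴴ := by rw [conjTranspose_conjTranspose]
      calc u * (((πα g : Matrix (Fin n) (Fin n) ℂ) ⊗ₖ (πγ g : Matrix (Fin m) (Fin m) ℂ)) *
            (a ⊗ₖ (1 : Matrix (Fin m) (Fin m) ℂ)) *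
            ((πα g : Matrix (Fin n) (Fin n) ℂ) ⊗ₖ (πγ g : Matrix (Fin m) (Fin m) ℂ))ᴴ) * uᴴ
          = (u * ((πα g : Matrix (Fin n) (Fin n) ℂ) ⊗ₖ (πγ g : Matrix (Fin m) (Fin m) ℂ))) *
            (a ⊗ₖ (1 : Matrix (Fin m) (Fin m) ℂ)) *
            (u * ((πα g : Matrix (Fin n) (Fin n) ℂ) ⊗ₖ (πγ g : Matrix (Fin m) (Fin m) ℂ)))ᴴ
            := by
            rw [conjTranspose_mul]
            simp only [Matrix.mul_assoc]
        _ = ((πβ g : Matrix (Fin k) (Fin k) ℂ) * u) * (a ⊗ₖ (1 : Matrix (Fin m) (Fin m) ℂ)) *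
            ((πβ g : Matrix (Fin k) (Fin k) ℂ) * u)ᴴ := by rw [← hint g]
        _ = (πβ g : Matrix (Fin k) (Fin k) ℂ) * (u * (a ⊗ₖ (1 : Matrix (Fin m) (Fin m) ℂ)) * uᴴ)
            * (πβ g : Matrix (Fin k) (Fin k) ℂ)ᴴ := by
            rw [conjTranspose_mul]
            simp only [Matrix.mul_assoc]
end

section
/- For every n ≥ 1, the map from Matrix.unitaryGroup (Fin n) ℂ to the group of star-algebra automorphisms of Matrix (Fin n) (Fin n) ℂ sending a unitary U to Ad U : a ↦ U·a·U⁻¹ is a surjective group homomorphism whose kernel is exactly the subgroup of scalar unitaries {c • 1 : c ∈ Circle}; consequently the automorphism group of M_n(ℂ) as a star-algebra is isomorphic to the projective unitary group PU(n) = U(n)/Circle. -/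
open Matrix Complex

namespace AdAux

variable {n : ℕ}

local notation "M" => Matrix (Fin n) (Fin n) ℂ

/-- Conjugation by a unitary matrix, as a star-algebra automorphism. -/
noncomputable def adAut (U : Matrix.unitaryGroup (Fin n) ℂ) : M ≃⋆ₐ[ℂ] M where
  toFun a := (U : M) * a * star (U : M)
  invFun a := star (U : M) * a * (U : M)
  left_inv a := by
    have h1 : star (U : M) * (U : M) = 1 := U.2.1
    simp only [← mul_assoc]
    rw [h1, one_mul, mul_assoc, h1, mul_one]
  right_inv a := by
    have h2 : (U : M) * star (U : M) = 1 := U.2.2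
    simp only [← mul_assoc]
    rw [h2, one_mul, mul_assoc, h2, mul_one]
  map_mul' a b := by
    have h1 : star (U : M) * (U : M) = 1 := U.2.1
    simp only [← mul_assoc]
    rw [mul_assoc ((U : M) * a) (star (U : M)) (U : M), h1, mul_one]
  map_add' a b := by noncomm_ring
  map_star' a := by simp [StarMul.star_mul, mul_assoc]
  map_smul' c a := by simp [Matrix.smul_mul, Matrix.mul_smul]

lemma adAut_apply (U : Matrix.unitaryGroup (Fin n) ℂ) (a : M) :
    adAut U a = (U : M) * a * star (U : M) := rfl

lemma star_stdBasisMatrix' (i j : Fin n) :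
    star (Matrix.single i j (1 : ℂ)) = Matrix.single j i 1 := by
  ext a b
  simp [Matrix.star_apply, Matrix.single, and_comm, apply_ite (star : ℂ → ℂ)]

/-- Every star-algebra automorphism of `Mₙ(ℂ)` is conjugation by a unitary. -/
theorem exists_unitary (hn : 1 ≤ n) (φ : M ≃⋆ₐ[ℂ] M) :
    ∃ U : M, U ∈ Matrix.unitaryGroup (Fin n) ℂ ∧ ∀ a, φ a = U * a * star U := by
  classical
  set i0 : Fin n := ⟨0, hn⟩
  set E : Fin n → Fin n → M := fun i j => Matrix.single i j 1 with hE
  have hEE : ∀ i j : Fin n, E i0 i * E j i0 = if i = j then E i0 i0 else 0 := by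
    intro i j
    simp only [hE]
    by_cases h : i = j
    · subst h; rw [if_pos rfl]; simp
    · rw [if_neg h, Matrix.single_mul_single_of_ne 1 i0 i j h 1]
  set p : M := φ (E i0 i0) with hp
  have hpp : p * p = p := by
    rw [hp, ← _root_.map_mul]
    congr 1
    simp [hE]
  have hpne : p ≠ 0 := by
    intro h
    have h0 : φ (E i0 i0) = φ 0 := by rw [← hp, h, map_zero]
    have : E i0 i0 = 0 := EquivLike.injective φ h0
    have := congrFun (congrFun this i0) i0
    simp [hE, Matrix.single] at this
  -- find a unit vector fixed by p
  obtain ⟨v, hv⟩ : ∃ v : Fin n → ℂ, p *ᵥ v ≠ 0 := by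
    by_contra h
    push_neg at h
    apply hpne
    ext i j
    have := congrFun (h (Pi.single j 1)) i
    simpa [Matrix.mulVec_single] using this
  set w : Fin n → ℂ := p *ᵥ v with hw
  have hpw : p *ᵥ w = w := by
    rw [hw, Matrix.mulVec_mulVec, hpp]
  set s : ℝ := ∑ i, Complex.normSq (w i) with hs
  have hspos : 0 < s := by
    obtain ⟨i, hi⟩ := Function.ne_iff.mp hv
    refine Finset.sum_pos' (fun i _ => Complex.normSq_nonneg _) ⟨i, Finset.mem_univ i, ?_⟩
    exact Complex.normSq_pos.mpr hi
  set t : ℝ := (Real.sqrt s)⁻¹ with ht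
  set u : Fin n → ℂ := (t : ℂ) • w with hu
  have hpu : p *ᵥ u = u := by
    rw [hu, Matrix.mulVec_smul, hpw]
  have hww : star w ⬝ᵥ w = (s : ℂ) := by
    simp only [dotProduct, Pi.star_apply, hs]
    push_cast
    refine Finset.sum_congr rfl fun i _ => ?_
    rw [Complex.normSq_eq_conj_mul_self]
    rfl
  have huu : star u ⬝ᵥ u = 1 := by
    rw [hu, star_smul, smul_dotProduct, dotProduct_smul, hww]
    have hstar : star (t : ℂ) = (t : ℂ) := by simp [Complex.ext_iff]
    rw [hstar, smul_eq_mul, smul_eq_mul, ← mul_assoc, ← Complex.ofReal_mul,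
      ← Complex.ofReal_mul]
    norm_cast
    rw [ht, ← Real.sqrt_mul_self (le_of_lt hspos)]
    have h0 : Real.sqrt s ≠ 0 := by positivity
    field_simp
    rw [Real.sq_sqrt (Real.sqrt_nonneg _)]
  -- the columns of U
  set col : Fin n → (Fin n → ℂ) := fun i => φ (E i i0) *ᵥ u with hcol
  set U : M := Matrix.of (fun k i => col i k) with hU
  have hstarφ : ∀ i : Fin n, (φ (E i i0))ᴴ = φ (E i0 i) := by
    intro i
    rw [← Matrix.star_eq_conjTranspose, ← map_star]
    congr 1
    exact star_stdBasisMatrix' i i0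
  have horth : ∀ i j, star (col i) ⬝ᵥ col j = if i = j then 1 else 0 := by
    intro i j
    show star (φ (E i i0) *ᵥ u) ⬝ᵥ (φ (E j i0) *ᵥ u) = _
    rw [Matrix.star_mulVec, ← Matrix.dotProduct_mulVec, Matrix.mulVec_mulVec,
      hstarφ, ← _root_.map_mul, hEE]
    by_cases h : i = j
    · rw [if_pos h, if_pos h, ← hp, hpu, huu]
    · rw [if_neg h, if_neg h, map_zero, Matrix.zero_mulVec, dotProduct_zero]
  have hUU : star U * U = 1 := by
    ext i j
    rw [Matrix.mul_apply, Matrix.one_apply]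
    have := horth i j
    simp only [dotProduct, Pi.star_apply] at this
    simp only [Matrix.star_apply, hU, Matrix.of_apply]
    exact this
  have hUmem : U ∈ Matrix.unitaryGroup (Fin n) ℂ :=
    (Matrix.mem_unitaryGroup_iff').mpr hUU
  have hUU' : U * star U = 1 := mul_eq_one_comm.mp hUU
  have hcolE : ∀ (k l i : Fin n), φ (E k l) *ᵥ col i = if l = i then col k else 0 := by
    intro k l i
    show φ (E k l) *ᵥ (φ (E i i0) *ᵥ u) = _
    rw [Matrix.mulVec_mulVec, ← _root_.map_mul]
    by_cases h : l = i
    · subst h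
      rw [if_pos rfl]
      have hEkl : E k l * E l i0 = E k i0 := by simp [hE]
      rw [hEkl]
    · rw [if_neg h]
      have hEkl : E k l * E i i0 = 0 := by
        simp only [hE]
        exact Matrix.single_mul_single_of_ne 1 k l i h 1
      rw [hEkl, map_zero, Matrix.zero_mulVec]
  have hint : ∀ a : M, φ a * U = U * a := by
    intro a
    induction a using Matrix.induction_on' with
    | h_zero => simp
    | h_add a b ha hb => rw [map_add, add_mul, ha, hb, Matrix.mul_add]
    | h_std_basis k l x =>
      have hx : Matrix.single k l x = x • E k l := by
        simp only [hE]
        rw [Matrix.smul_single, smul_eq_mul, mul_one]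
      rw [hx, _root_.map_smul, Matrix.smul_mul, Matrix.mul_smul]
      congr 1
      ext x' i
      conv_lhs => rw [Matrix.mul_apply]
      have hL : ∑ y, φ (E k l) x' y * U y i = (φ (E k l) *ᵥ col i) x' := by
        simp [Matrix.mulVec, dotProduct, hU]
      rw [hL, hcolE]
      by_cases h : l = i
      · subst h
        rw [if_pos rfl]
        have hR : (U * E k l) x' l = U x' k * 1 := by
          simp only [hE]
          exact Matrix.mul_single_apply_same 1 k l x' U
        rw [hR, mul_one]
        rfl
      · rw [if_neg h]
        have hR : (U * E k l) x' i = 0 := by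
          simp only [hE]
          exact Matrix.mul_single_apply_of_ne 1 k l x' i (Ne.symm h) U
        rw [hR]
        rfl
  refine ⟨U, hUmem, fun a => ?_⟩
  calc φ a = φ a * (U * star U) := by rw [hUU', mul_one]
    _ = (φ a * U) * star U := by rw [mul_assoc]
    _ = U * a * star U := by rw [hint]

lemma adAut_mul (U V : Matrix.unitaryGroup (Fin n) ℂ) :
    adAut (U * V) = (adAut V).trans (adAut U) := by
  refine StarAlgEquiv.ext fun a => ?_
  simp only [StarAlgEquiv.trans_apply, adAut_apply, Matrix.UnitaryGroup.mul_val,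
    StarMul.star_mul, mul_assoc]

lemma adAut_one : adAut (1 : Matrix.unitaryGroup (Fin n) ℂ) = StarAlgEquiv.refl ℂ M := by
  refine StarAlgEquiv.ext fun a => ?_
  simp [adAut_apply]

lemma adAut_eq_refl_iff (hn : 1 ≤ n) (U : Matrix.unitaryGroup (Fin n) ℂ) :
    adAut U = StarAlgEquiv.refl ℂ M ↔ ∃ c : Circle, (U : M) = (c : ℂ) • 1 := by
  constructor
  · intro h
    have ha : ∀ a : M, (U : M) * a * star (U : M) = a := fun a => by
      have := DFunLike.congr_fun h a
      simpa [adAut_apply] using this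
    have hcomm : ∀ a : M, Commute a (U : M) := by
      intro a
      have h1 : star (U : M) * (U : M) = 1 := U.2.1
      have := ha a
      calc a * (U : M) = ((U : M) * a * star (U : M)) * (U : M) := by rw [this]
        _ = (U : M) * a * (star (U : M) * (U : M)) := by simp only [mul_assoc]
        _ = (U : M) * a := by rw [h1, mul_one]
    obtain ⟨r, hr⟩ := Matrix.mem_range_scalar_iff_commute_single'.mpr
      (fun i j => hcomm _)
    have hscal : (U : M) = r • (1 : M) := by
      rw [← hr, Matrix.scalar_apply]
      ext i j
      simp [Matrix.diagonal, Matrix.one_apply, mul_comm]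
    have hstarU : star (U : M) * (U : M) = 1 := U.2.1
    rw [hscal] at hstarU
    have h1 : (starRingEnd ℂ r * r) • (1 : M) = 1 := by
      conv_rhs => rw [← hstarU]
      rw [star_smul, star_one, Complex.star_def, Matrix.smul_mul, one_mul, smul_smul]
    set i0 : Fin n := ⟨0, hn⟩
    have h2 : starRingEnd ℂ r * r = 1 := by
      have := congrFun (congrFun h1 i0) i0
      simpa [Matrix.smul_apply, Matrix.one_apply] using this
    have hnorm : ‖r‖ = 1 := by
      have : Complex.normSq r = 1 := by
        have h3 : ((Complex.normSq r : ℂ)) = 1 := by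
          rw [Complex.normSq_eq_conj_mul_self, h2]
        exact_mod_cast h3
      have habs : ‖r‖ = 1 := by
        rw [← Complex.sq_norm] at this
        nlinarith [norm_nonneg r]
      simpa using habs
    exact ⟨⟨r, mem_sphere_zero_iff_norm.mpr hnorm⟩, hscal⟩
  · rintro ⟨c, hc⟩
    refine StarAlgEquiv.ext fun a => ?_
    have hcc : (c : ℂ) * starRingEnd ℂ (c : ℂ) = 1 := by
      rw [Complex.mul_conj]
      exact_mod_cast Circle.normSq_coe c
    show (U : M) * a * star (U : M) = a
    rw [hc]
    rw [star_smul, star_one]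
    show ((c : ℂ) • 1) * a * ((starRingEnd ℂ (c : ℂ)) • 1) = a
    rw [Matrix.smul_mul, one_mul, Matrix.mul_smul, Matrix.mul_one, smul_smul,
      mul_comm, hcc, one_smul]

end AdAux

/-- `U ↦ Ad U` is a surjective multiplicative map from the unitary group `U(n)` onto the
star-algebra automorphisms of `Mₙ(ℂ)`, whose kernel is exactly the scalar unitaries
`{c • 1 : c ∈ Circle}`; hence the star-automorphism group of `Mₙ(ℂ)` is `PU(n) = U(n)/𝕋`. -/
theorem ad_surjective_kernel_scalars
    (n : ℕ) (hn : 1 ≤ n) :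
    ∃ Φ : Matrix.unitaryGroup (Fin n) ℂ →
        (Matrix (Fin n) (Fin n) ℂ ≃⋆ₐ[ℂ] Matrix (Fin n) (Fin n) ℂ),
      (∀ (U : Matrix.unitaryGroup (Fin n) ℂ) (a : Matrix (Fin n) (Fin n) ℂ),
        Φ U a = (U : Matrix (Fin n) (Fin n) ℂ) * a *
          ((U⁻¹ : Matrix.unitaryGroup (Fin n) ℂ) : Matrix (Fin n) (Fin n) ℂ)) ∧
      (∀ U V : Matrix.unitaryGroup (Fin n) ℂ, Φ (U * V) = (Φ V).trans (Φ U)) ∧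
      Function.Surjective Φ ∧
      (∀ U : Matrix.unitaryGroup (Fin n) ℂ,
        Φ U = StarAlgEquiv.refl ℂ (Matrix (Fin n) (Fin n) ℂ) ↔
          ∃ c : Circle, (U : Matrix (Fin n) (Fin n) ℂ) = (c : ℂ) • 1) ∧
      (∀ U V : Matrix.unitaryGroup (Fin n) ℂ,
        Φ U = Φ V ↔
          ∃ c : Circle, (U : Matrix (Fin n) (Fin n) ℂ) =
            (c : ℂ) • (V : Matrix (Fin n) (Fin n) ℂ)) := by
  refine ⟨AdAux.adAut, fun U a => rfl, AdAux.adAut_mul, ?_, AdAux.adAut_eq_refl_iff hn, ?_⟩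
  · intro ψ
    obtain ⟨U, hU, h⟩ := AdAux.exists_unitary hn ψ
    exact ⟨⟨U, hU⟩, StarAlgEquiv.ext fun a => (h a).symm⟩
  · intro U V
    have hmul : V * (V⁻¹ * U) = U := by group
    constructor
    · intro h
      have hker : AdAux.adAut (V⁻¹ * U) = StarAlgEquiv.refl ℂ (Matrix (Fin n) (Fin n) ℂ) := by
        have h2 : AdAux.adAut (V⁻¹ * U) =
            (AdAux.adAut U).trans (AdAux.adAut V⁻¹) := by
          have : V⁻¹ * U = V⁻¹ * U := rfl
          rw [AdAux.adAut_mul]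
        rw [h2, h, ← AdAux.adAut_mul, inv_mul_cancel, AdAux.adAut_one]
      obtain ⟨c, hc⟩ := (AdAux.adAut_eq_refl_iff hn (V⁻¹ * U)).mp hker
      have hc' : star (V : Matrix (Fin n) (Fin n) ℂ) * U = (c : ℂ) • 1 := hc
      refine ⟨c, ?_⟩
      have hV : (V : Matrix (Fin n) (Fin n) ℂ) * star (V : Matrix (Fin n) (Fin n) ℂ) = 1 :=
        V.2.2
      calc (U : Matrix (Fin n) (Fin n) ℂ)
          = ((V : Matrix (Fin n) (Fin n) ℂ) * star (V : Matrix (Fin n) (Fin n) ℂ)) * U := by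
            rw [hV, one_mul]
        _ = (V : Matrix (Fin n) (Fin n) ℂ) * (star (V : Matrix (Fin n) (Fin n) ℂ) * U) := by
            rw [mul_assoc]
        _ = (V : Matrix (Fin n) (Fin n) ℂ) * ((c : ℂ) • 1) := by rw [hc']
        _ = (c : ℂ) • (V : Matrix (Fin n) (Fin n) ℂ) := by
            rw [Matrix.mul_smul, Matrix.mul_one]
    · rintro ⟨c, hc⟩
      have hker : AdAux.adAut (V⁻¹ * U) = StarAlgEquiv.refl ℂ (Matrix (Fin n) (Fin n) ℂ) := by
        refine (AdAux.adAut_eq_refl_iff hn _).mpr ⟨c, ?_⟩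
        show star (V : Matrix (Fin n) (Fin n) ℂ) * U = (c : ℂ) • 1
        rw [hc, Matrix.mul_smul, V.2.1]
      calc AdAux.adAut U = AdAux.adAut (V * (V⁻¹ * U)) := by rw [hmul]
        _ = (AdAux.adAut (V⁻¹ * U)).trans (AdAux.adAut V) := AdAux.adAut_mul _ _
        _ = AdAux.adAut V := by
            rw [hker]
            exact StarAlgEquiv.ext fun a => rfl
end
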